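/- arXiv:1711.01411 — 10 statements merged into one kernel-verified Lean document; each statement's English description precedes it below -/
import Mathlib

section
/- Fix an integer p ≥ 1. For all non-negative integers x and y, the Grundy value of the position (x,y) in generalized Ryūō Nim for p is 𝒢((x,y)) = mod(x+y, p) + p·(⌊x/p⌋ ⊕ ⌊y/p⌋). -/
/-- The minimum excluded value of a set of natural numbers. -/
noncomputable def mex (S : Set ℕ) : ℕ := sInf {n : ℕ | n ∉ S}

/-- The moves of generalized Ryūō Nim for `p` from a position `(x, y)`. -/
def ryuoMove (p : ℕ) (pos : ℕ × ℕ) : Set (ℕ × ℕ) :=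
  {q | ∃ u < pos.1, q = (u, pos.2)} ∪
  {q | ∃ v < pos.2, q = (pos.1, v)} ∪
  {q | ∃ s t : ℕ, 1 ≤ s ∧ s ≤ pos.1 ∧ 1 ≤ t ∧ t ≤ pos.2 ∧ s + t ≤ p - 1 ∧
        q = (pos.1 - s, pos.2 - t)}

/-!
Let `F` be the claimed formula. Since `mod(x + y, p) < p`, the residue of `F(x, y)` modulo `p` is
`mod(x + y, p)` and its quotient is the nim-sum of the block indices `⌊x/p⌋` and `⌊y/p⌋`. As every
move lowers `x + y`, `𝒢 = F` follows once no move keeps `F` and every smaller value is reached.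

No move keeps `F`: a rook move keeping both the residue and the quotient would keep the moved
coordinate, and a diagonal move lowers `x + y` by one of `1, …, p - 1`, which changes the residue.
A smaller value `g` is reached: if `⌊g/p⌋ < ⌊x/p⌋ ⊕ ⌊y/p⌋`, by a rook move into a lower block, as
in two-heap Nim, with the residue adjusted inside that block; if the quotients agree, by a rook or
diagonal move inside the current `p × p` block lowering `x + y` by `mod(x + y, p) - mod(g, p)`.
-/

lemma mex_eq_of_forall_lt_mem {S : Set ℕ} {v : ℕ} (hv : v ∉ S) (h : ∀ g < v, g ∈ S) :
    mex S = v :=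
  le_antisymm (Nat.sInf_le hv) (le_csInf ⟨v, hv⟩ fun _ hn => not_lt.1 fun hlt => hn (h _ hlt))

theorem eq_of_mex_recursion {α : Type*} {move : α → Set α}
    (hwf : WellFounded fun b a => b ∈ move a) {G F : α → ℕ}
    (hG : ∀ a, G a = mex (G '' move a)) (hF_ne : ∀ a, ∀ b ∈ move a, F b ≠ F a)
    (hF_lt : ∀ a, ∀ g < F a, ∃ b ∈ move a, F b = g) (a : α) : G a = F a := by
  induction a using hwf.induction with
  | _ a ih =>
    rw [hG, Set.image_congr ih]
    exact mex_eq_of_forall_lt_mem (fun ⟨b, hb, hFb⟩ => hF_ne a b hb hFb) (hF_lt a)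

lemma Nat.sub_div_eq_div_of_le_mod {x s p : ℕ} (hp : 0 < p) (hs : s ≤ x % p) :
    (x - s) / p = x / p := by
  conv_lhs => rw [← Nat.div_add_mod x p, Nat.add_sub_assoc hs, Nat.mul_add_div hp]
  rw [Nat.div_eq_of_lt ((Nat.sub_le _ _).trans_lt (Nat.mod_lt x hp)), add_zero]

lemma Nat.exists_lt_add_mod_eq {p : ℕ} (hp : 0 < p) (n c : ℕ) : ∃ i < p, (i + n) % p = c % p := by
  refine ⟨(c + p * n - n) % p, Nat.mod_lt _ hp, ?_⟩
  have hn : n ≤ p * n := Nat.le_mul_of_pos_left n hp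
  rw [Nat.mod_add_mod, Nat.sub_add_cancel (hn.trans (Nat.le_add_left _ _)),
    Nat.add_mul_mod_self_left]

namespace RyuoNim

def grundy (p : ℕ) (pos : ℕ × ℕ) : ℕ := (pos.1 + pos.2) % p + p * (pos.1 / p ^^^ pos.2 / p)

variable {p : ℕ}

lemma grundy_comm (x y : ℕ) : grundy p (x, y) = grundy p (y, x) := by
  simp only [grundy, Nat.add_comm x y, Nat.xor_comm]

lemma grundy_mod (x y : ℕ) : grundy p (x, y) % p = (x + y) % p := by
  simp only [grundy, Nat.add_mul_mod_self_left, Nat.mod_mod]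

lemma grundy_div (hp : 0 < p) (x y : ℕ) : grundy p (x, y) / p = x / p ^^^ y / p := by
  simp only [grundy, Nat.add_mul_div_left _ _ hp, Nat.div_eq_of_lt (Nat.mod_lt _ hp), zero_add]

lemma grundy_eq_iff (hp : 0 < p) {x y g : ℕ} :
    grundy p (x, y) = g ↔ (x + y) % p = g % p ∧ x / p ^^^ y / p = g / p := by
  refine ⟨by rintro rfl; exact ⟨(grundy_mod x y).symm, (grundy_div hp x y).symm⟩, ?_⟩
  rintro ⟨hmod, hdiv⟩
  rw [grundy, hmod, hdiv, Nat.mod_add_div]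

lemma sum_lt_of_mem_ryuoMove {q pos : ℕ × ℕ} (hq : q ∈ ryuoMove p pos) :
    q.1 + q.2 < pos.1 + pos.2 := by
  rcases hq with (⟨u, hu, rfl⟩ | ⟨v, hv, rfl⟩) | ⟨s, t, hs, hsx, ht, hty, -, rfl⟩ <;>
    simp only <;> omega

lemma wellFounded_ryuoMove : WellFounded fun q pos => q ∈ ryuoMove p pos :=
  Subrelation.wf sum_lt_of_mem_ryuoMove (measure fun pos : ℕ × ℕ => pos.1 + pos.2).wf

lemma left_mem_ryuoMove {u x y : ℕ} (hu : u < x) : (u, y) ∈ ryuoMove p (x, y) :=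
  Or.inl (Or.inl ⟨u, hu, rfl⟩)

lemma right_mem_ryuoMove {v x y : ℕ} (hv : v < y) : (x, v) ∈ ryuoMove p (x, y) :=
  Or.inl (Or.inr ⟨v, hv, rfl⟩)

lemma sub_sub_mem_ryuoMove {x y s t : ℕ} (hs : s ≤ x) (ht : t ≤ y) (hst_pos : 0 < s + t)
    (hst : s + t < p) : (x - s, y - t) ∈ ryuoMove p (x, y) := by
  rcases Nat.eq_zero_or_pos s with rfl | hs_pos
  · simpa using right_mem_ryuoMove (x := x) (by omega : y - t < y)
  rcases Nat.eq_zero_or_pos t with rfl | ht_pos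
  · simpa using left_mem_ryuoMove (y := y) (by omega : x - s < x)
  exact Or.inr ⟨s, t, hs_pos, hs, ht_pos, ht, by omega, rfl⟩

lemma grundy_left_ne (hp : 0 < p) {u x y : ℕ} (hu : u < x) :
    grundy p (u, y) ≠ grundy p (x, y) := by
  intro h
  rw [grundy_eq_iff hp, grundy_mod, grundy_div hp, Nat.xor_left_inj] at h
  have hmod : u % p = x % p := Nat.ModEq.add_right_cancel' y h.1
  refine hu.ne ?_
  calc u = p * (u / p) + u % p := (Nat.div_add_mod u p).symm
    _ = p * (x / p) + x % p := by rw [h.2, hmod]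
    _ = x := Nat.div_add_mod x p

lemma grundy_sub_sub_ne {x y s t : ℕ} (hs : s ≤ x) (ht : t ≤ y) (hst_pos : 0 < s + t)
    (hst : s + t < p) : grundy p (x - s, y - t) ≠ grundy p (x, y) := by
  intro h
  have hmod := congrArg (· % p) h
  simp only [grundy_mod] at hmod
  have hsum : x + y = (x - s + (y - t)) + (s + t) := by omega
  rw [hsum] at hmod
  have : 0 ≡ s + t [MOD p] := Nat.ModEq.add_left_cancel' _ hmod
  rw [Nat.ModEq, Nat.zero_mod, Nat.mod_eq_of_lt hst] at this
  omega

lemma grundy_ne_of_mem_ryuoMove (hp : 0 < p) {q : ℕ × ℕ} {x y : ℕ}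
    (hq : q ∈ ryuoMove p (x, y)) : grundy p q ≠ grundy p (x, y) := by
  rcases hq with (⟨u, hu, rfl⟩ | ⟨v, hv, rfl⟩) | ⟨s, t, hs, hsx, ht, hty, hst, rfl⟩
  · exact grundy_left_ne hp hu
  · rw [grundy_comm, grundy_comm x]
    exact grundy_left_ne hp hv
  · exact grundy_sub_sub_ne hsx hty (by omega) (by omega)

lemma exists_left_grundy_eq (hp : 0 < p) {x y g : ℕ} (h : g / p ^^^ y / p < x / p) :
    ∃ u < x, grundy p (u, y) = g := by
  obtain ⟨i, hi, hmod⟩ := Nat.exists_lt_add_mod_eq hp y g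
  refine ⟨p * (g / p ^^^ y / p) + i, ?_, ?_⟩
  · calc p * (g / p ^^^ y / p) + i < p * ((g / p ^^^ y / p) + 1) := by rw [Nat.mul_add_one]; omega
      _ ≤ p * (x / p) := Nat.mul_le_mul_left p (Nat.succ_le_of_lt h)
      _ ≤ x := Nat.mul_div_le x p
  · rw [grundy_eq_iff hp, Nat.add_assoc, Nat.mul_add_mod, Nat.mul_add_div hp,
      Nat.div_eq_of_lt hi, add_zero, xor_cancel_right]
    exact ⟨hmod, rfl⟩

lemma exists_right_grundy_eq (hp : 0 < p) {x y g : ℕ} (h : g / p ^^^ x / p < y / p) :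
    ∃ v < y, grundy p (x, v) = g := by
  obtain ⟨v, hv, hg⟩ := exists_left_grundy_eq hp h
  exact ⟨v, hv, grundy_comm x v ▸ hg⟩

lemma exists_mem_ryuoMove_grundy_eq_of_div_eq (hp : 0 < p) {x y g : ℕ}
    (hdiv : x / p ^^^ y / p = g / p) (hmod : g % p < (x + y) % p) :
    ∃ q ∈ ryuoMove p (x, y), grundy p q = g := by
  set d := (x + y) % p - g % p
  have hd_le : d ≤ (x + y) % p := Nat.sub_le _ _
  have hdigits : (x + y) % p ≤ x % p + y % p := Nat.add_mod x y p ▸ Nat.mod_le _ _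
  have hsum_lt : (x + y) % p < p := Nat.mod_lt _ hp
  have hs : d - min d (y % p) ≤ x % p := by omega
  have ht : min d (y % p) ≤ y % p := min_le_right _ _
  refine ⟨(x - (d - min d (y % p)), y - min d (y % p)),
    sub_sub_mem_ryuoMove ?_ ?_ (by omega) (by omega), ?_⟩
  · exact hs.trans (Nat.mod_le x p)
  · exact ht.trans (Nat.mod_le y p)
  rw [grundy_eq_iff hp, Nat.sub_div_eq_div_of_le_mod hp hs, Nat.sub_div_eq_div_of_le_mod hp ht,
    hdiv]
  refine ⟨?_, rfl⟩
  have hsum : x - (d - min d (y % p)) + (y - min d (y % p)) = x + y - d := by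
    have := Nat.mod_le x p
    have := Nat.mod_le y p
    omega
  rw [hsum, ← Nat.mod_sub_of_le hd_le]
  omega

lemma exists_mem_ryuoMove_grundy_eq (hp : 0 < p) {x y g : ℕ} (hg : g < grundy p (x, y)) :
    ∃ q ∈ ryuoMove p (x, y), grundy p q = g := by
  have hdiv_le : g / p ≤ x / p ^^^ y / p := grundy_div hp x y ▸ Nat.div_le_div_right hg.le
  rcases hdiv_le.lt_or_eq with hlt | heq
  · rcases Nat.lt_xor_cases hlt with h | h
    · obtain ⟨u, hu, hgu⟩ := exists_left_grundy_eq hp h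
      exact ⟨_, left_mem_ryuoMove hu, hgu⟩
    · obtain ⟨v, hv, hgv⟩ := exists_right_grundy_eq hp h
      exact ⟨_, right_mem_ryuoMove hv, hgv⟩
  · refine exists_mem_ryuoMove_grundy_eq_of_div_eq hp heq.symm ?_
    have hF := Nat.mod_add_div (grundy p (x, y)) p
    rw [grundy_mod, grundy_div hp, ← heq] at hF
    have := Nat.mod_add_div g p
    omega

end RyuoNim

theorem stmt_0 (p : ℕ) (hp : 1 ≤ p) (G : ℕ × ℕ → ℕ)
    (hG : ∀ pos : ℕ × ℕ, G pos = mex (G '' ryuoMove p pos)) :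
    ∀ x y : ℕ, G (x, y) = (x + y) % p + p * ((x / p) ^^^ (y / p)) := by
  intro x y
  exact eq_of_mex_recursion RyuoNim.wellFounded_ryuoMove hG
    (fun _ _ hq => RyuoNim.grundy_ne_of_mem_ryuoMove hp hq)
    (fun _ _ hg => RyuoNim.exists_mem_ryuoMove_grundy_eq hp hg) (x, y)
end

section
/- Fix an integer p ≥ 1 and non-negative integers k, h. Let A_{k,h} = {p·((k−t) ⊕ h) + u : integers t, u with 1 ≤ t ≤ k and 0 ≤ u ≤ p−1} ∪ {p·(k ⊕ (h−t)) + u : integers t, u with 1 ≤ t ≤ h and 0 ≤ u ≤ p−1}. Then for every integer v with 0 ≤ v ≤ p−1, p·(k ⊕ h) + v = mex(A_{k,h} ∪ {p·(k ⊕ h) + w : 0 ≤ w < v}); in particular, for v = 0, p·(k ⊕ h) = mex(A_{k,h}). -/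
private lemma pack_inj (p a b u w : ℕ) (hp : 0 < p) (hu : u < p) (hw : w < p)
    (he : p * a + u = p * b + w) : a = b ∧ u = w := by
  have h1 : (p * a + u) / p = a := by
    rw [Nat.mul_add_div hp, Nat.div_eq_of_lt hu, Nat.add_zero]
  have h2 : (p * b + w) / p = b := by
    rw [Nat.mul_add_div hp, Nat.div_eq_of_lt hw, Nat.add_zero]
  have h3 : (p * a + u) % p = u := by
    rw [Nat.mul_add_mod, Nat.mod_eq_of_lt hu]
  have h4 : (p * b + w) % p = w := by
    rw [Nat.mul_add_mod, Nat.mod_eq_of_lt hw]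
  constructor
  · rw [← h1, ← h2, he]
  · rw [← h3, ← h4, he]

theorem stmt_2 (p : ℕ) (hp : 1 ≤ p) (k h : ℕ) (A : Set ℕ)
    (hA : A = {n : ℕ | ∃ t u : ℕ, 1 ≤ t ∧ t ≤ k ∧ u ≤ p - 1 ∧
                  n = p * ((k - t) ^^^ h) + u} ∪
               {n : ℕ | ∃ t u : ℕ, 1 ≤ t ∧ t ≤ h ∧ u ≤ p - 1 ∧
                  n = p * (k ^^^ (h - t)) + u}) :
    (∀ v : ℕ, v ≤ p - 1 →
      p * (k ^^^ h) + v = mex (A ∪ {n : ℕ | ∃ w < v, n = p * (k ^^^ h) + w})) ∧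
    p * (k ^^^ h) = mex A := by
  have main : ∀ v : ℕ, v ≤ p - 1 →
      p * (k ^^^ h) + v = mex (A ∪ {n : ℕ | ∃ w < v, n = p * (k ^^^ h) + w}) := by
    intro v hv
    set S : Set ℕ := A ∪ {n : ℕ | ∃ w < v, n = p * (k ^^^ h) + w} with hS
    set N := p * (k ^^^ h) + v with hN
    have hvp : v < p := lt_of_le_of_lt hv (Nat.sub_lt hp Nat.one_pos)
    -- N ∉ S
    have hNnot : N ∉ S := by
      rintro (hmem | hmem)
      · rw [hA] at hmem
        rcases hmem with ⟨t, u, ht1, ht2, hu, he⟩ | ⟨t, u, ht1, ht2, hu, he⟩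
        · have hup : u < p := lt_of_le_of_lt hu (Nat.sub_lt hp Nat.one_pos)
          obtain ⟨h1, h2⟩ := pack_inj p ((k - t) ^^^ h) (k ^^^ h) u v hp hup hvp he.symm
          have : k - t = k := Nat.xor_left_injective h1
          omega
        · have hup : u < p := lt_of_le_of_lt hu (Nat.sub_lt hp Nat.one_pos)
          obtain ⟨h1, h2⟩ := pack_inj p (k ^^^ (h - t)) (k ^^^ h) u v hp hup hvp he.symm
          have : h - t = h := Nat.xor_right_injective h1
          omega
      · obtain ⟨w, hw, he⟩ := hmem
        omega
    -- all m < N are in S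
    have hbelow : ∀ m, m < N → m ∈ S := by
      intro m hm
      set q := m / p with hq
      set u := m % p with hu
      have hup : u < p := Nat.mod_lt _ (by omega)
      have hmdec : p * q + u = m := Nat.div_add_mod m p
      have hqle : q ≤ k ^^^ h := by
        by_contra hc
        push_neg at hc
        have h1 := Nat.mul_le_mul_left p (Nat.succ_le_of_lt hc)
        rw [Nat.mul_succ] at h1
        omega
      rcases lt_or_eq_of_le hqle with hqlt | hqeq
      · rcases Nat.lt_xor_cases hqlt with hlt | hlt
        · left
          rw [hA]
          left
          refine ⟨k - (q ^^^ h), u, by omega, by omega, by omega, ?_⟩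
          have e1 : k - (k - (q ^^^ h)) = q ^^^ h := by omega
          have e2 : (q ^^^ h) ^^^ h = q := by simp [Nat.xor_assoc]
          rw [e1, e2]; omega
        · left
          rw [hA]
          right
          refine ⟨h - (q ^^^ k), u, by omega, by omega, by omega, ?_⟩
          have e1 : h - (h - (q ^^^ k)) = q ^^^ k := by omega
          have e2 : k ^^^ (q ^^^ k) = q := by
            rw [Nat.xor_comm q k, ← Nat.xor_assoc]; simp
          rw [e1, e2]; omega
      · right
        rw [hqeq] at hmdec
        exact ⟨u, by omega, by omega⟩
    have hNmem : N ∈ {n : ℕ | n ∉ S} := hNnot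
    apply le_antisymm
    · apply le_csInf ⟨N, hNmem⟩
      intro m hm
      by_contra hc
      push_neg at hc
      exact hm (hbelow m hc)
    · exact Nat.sInf_le hNmem
  refine ⟨main, ?_⟩
  have := main 0 (Nat.zero_le _)
  simpa using this
end

section
/- Fix an integer p ≥ 1, non-negative integers k, h, and integers v, w with 0 ≤ v, w ≤ p−1. Let C_{k,h,v,w} = {p·(k⊕h) + mod(v+w−t, p) : 1 ≤ t ≤ v} ∪ {p·(k⊕h) + mod(v+w−t, p) : 1 ≤ t ≤ w} ∪ {p·(⌊(pk+v−s)/p⌋ ⊕ ⌊(ph+w−t)/p⌋) + mod(v+w−s−t, p) : integers s, t with 1 ≤ s ≤ pk+v, 1 ≤ t ≤ ph+w and s+t ≤ p−1}. Then p·(k⊕h) + mod(v+w, p) does not belong to C_{k,h,v,w}. -/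
/-- The set `C_{k,h,v,w}` from Lemma 6 of the paper, for the parameter `p`.
`mod` of a possibly negative integer is computed with `Int.emod` (`%` on `ℤ`),
whose result lies in `{0, …, p-1}` for `p ≥ 1`, and converted back to `ℕ`. -/
def Cset (p k h v w : ℕ) : Set ℕ :=
  {n : ℕ | ∃ t : ℕ, 1 ≤ t ∧ t ≤ v ∧
      n = p * (k ^^^ h) + (((v : ℤ) + w - t) % p).toNat} ∪
  {n : ℕ | ∃ t : ℕ, 1 ≤ t ∧ t ≤ w ∧
      n = p * (k ^^^ h) + (((v : ℤ) + w - t) % p).toNat} ∪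
  {n : ℕ | ∃ s t : ℕ, 1 ≤ s ∧ s ≤ p * k + v ∧ 1 ≤ t ∧ t ≤ p * h + w ∧ s + t ≤ p - 1 ∧
      n = p * (((p * k + v - s) / p) ^^^ ((p * h + w - t) / p)) +
            (((v : ℤ) + w - s - t) % p).toNat}

lemma aux_stmt4 (p : ℕ) (hp : 1 ≤ p) (v w c Y X : ℕ) (hc1 : 1 ≤ c) (hc2 : c ≤ p - 1)
    (heq : p * Y + (v + w) % p = p * X + (((v : ℤ) + w - c) % p).toNat) : False := by
  have hppos : (0 : ℤ) < p := by exact_mod_cast hp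
  have h2 : ((v : ℤ) + w - c) % p < p := Int.emod_lt_of_pos _ hppos
  have h2' : 0 ≤ ((v : ℤ) + w - c) % p := Int.emod_nonneg _ (by positivity)
  have h3 : (((v : ℤ) + w - c) % p).toNat < p := by omega
  have h1 : (v + w) % p < p := Nat.mod_lt _ hp
  have hmod : (v + w) % p = (((v : ℤ) + w - c) % p).toNat := by
    have hh := congrArg (· % p) heq
    simpa [Nat.mul_add_mod, Nat.mod_eq_of_lt h1, Nat.mod_eq_of_lt h3] using hh
  have h4 : ((v : ℤ) + w) % p = ((v : ℤ) + w - c) % p := by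
    have := congrArg (fun n : ℕ => (n : ℤ)) hmod
    simp only [Int.toNat_of_nonneg h2'] at this
    rw [← this]
    push_cast
    rfl
    
  have hdvd : (p : ℤ) ∣ ((v : ℤ) + w - c) - ((v : ℤ) + w) := Int.ModEq.dvd h4
  have hdvd' : (p : ℤ) ∣ (c : ℤ) := by
    have : ((v : ℤ) + w - c) - ((v : ℤ) + w) = -(c : ℤ) := by ring
    rw [this] at hdvd
    exact (dvd_neg.mp hdvd)
  have := Int.le_of_dvd (by exact_mod_cast hc1) hdvd'
  omega

theorem stmt_4 (p : ℕ) (hp : 1 ≤ p) (k h v w : ℕ) (hv : v ≤ p - 1) (hw : w ≤ p - 1) :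
    p * (k ^^^ h) + (v + w) % p ∉ Cset p k h v w := by
  intro hmem
  rcases hmem with (⟨t, ht1, ht2, heq⟩ | ⟨t, ht1, ht2, heq⟩) | ⟨s, t, hs1, hs2, ht1, ht2, hst, heq⟩
  · exact aux_stmt4 p hp v w t _ _ ht1 (by omega) heq
  · exact aux_stmt4 p hp v w t _ _ ht1 (by omega) heq
  · have hcast : ((v : ℤ) + w - s - t) = ((v : ℤ) + w - (↑(s + t))) := by push_cast; ring
    rw [hcast] at heq
    exact aux_stmt4 p hp v w (s + t) _ _ (by omega) hst heq
end

section
/- Fix an integer p ≥ 1, non-negative integers k, h, and integers v, w with 0 ≤ v, w ≤ p−1. Let C_{k,h,v,w} = {p·(k⊕h) + mod(v+w−t, p) : 1 ≤ t ≤ v} ∪ {p·(k⊕h) + mod(v+w−t, p) : 1 ≤ t ≤ w} ∪ {p·(⌊(pk+v−s)/p⌋ ⊕ ⌊(ph+w−t)/p⌋) + mod(v+w−s−t, p) : integers s, t with 1 ≤ s ≤ pk+v, 1 ≤ t ≤ ph+w and s+t ≤ p−1}. Then for every non-negative integer u with 0 ≤ u < mod(v+w, p), the number p·(k⊕h) +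 u belongs to C_{k,h,v,w}. -/
private lemma modself (p u : ℕ) (hu : u < p) : (((u : ℤ)) % p).toNat = u := by
  rw [Int.emod_eq_of_lt (by positivity) (by exact_mod_cast hu)]
  simp

theorem stmt_5 (p : ℕ) (hp : 1 ≤ p) (k h v w : ℕ) (hv : v ≤ p - 1) (hw : w ≤ p - 1) :
    ∀ u : ℕ, u < (v + w) % p → p * (k ^^^ h) + u ∈ Cset p k h v w := by
  intro u hu
  have hvw : v + w < 2 * p := by omega
  have hmlt : (v + w) % p < p := Nat.mod_lt _ (by omega)
  have hup : u < p := lt_of_lt_of_le hu (le_of_lt hmlt)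
  by_cases hbig : p ≤ v + w
  · -- (v+w) % p = v+w-p
    have hm : (v + w) % p = v + w - p := by
      rw [Nat.mod_eq_sub_mod hbig]; exact Nat.mod_eq_of_lt (by omega)
    rw [hm] at hu
    refine Or.inl (Or.inl ⟨v + w - p - u, by omega, by omega, ?_⟩)
    have h1 : ((v : ℤ) + w - (v + w - p - u : ℕ)) = (u : ℤ) + (p : ℤ) * 1 := by
      omega
    rw [h1, Int.add_mul_emod_self_left, modself p u hup]
  · have hm : (v + w) % p = v + w := Nat.mod_eq_of_lt (by omega)
    by_cases h1 : w ≤ u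
    · refine Or.inl (Or.inl ⟨v + w - u, by omega, by omega, ?_⟩)
      have h2 : ((v : ℤ) + w - (v + w - u : ℕ)) = (u : ℤ) := by
        push_cast [Nat.cast_sub (by omega : u ≤ v + w)]; ring
      rw [h2, modself p u hup]
    · by_cases h2 : v ≤ u
      · refine Or.inl (Or.inr ⟨v + w - u, by omega, by omega, ?_⟩)
        have h3 : ((v : ℤ) + w - (v + w - u : ℕ)) = (u : ℤ) := by
          push_cast [Nat.cast_sub (by omega : u ≤ v + w)]; ring
        rw [h3, modself p u hup]
      · -- u < v, u < w : third set with s = v - u, t = w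
        refine Or.inr ⟨v - u, w, by omega, by omega, by omega, by omega, by omega, ?_⟩
        have hs : p * k + v - (v - u) = p * k + u := by omega
        have ht : p * h + w - w = p * h := by omega
        have hd1 : (p * k + u) / p = k := by
          rw [Nat.mul_add_div (by omega), Nat.div_eq_of_lt hup]; ring
        have hd2 : (p * h) / p = h := Nat.mul_div_cancel_left _ (by omega)
        rw [hs, ht, hd1, hd2]
        have h4 : ((v : ℤ) + w - (v - u : ℕ) - (w : ℕ)) = (u : ℤ) := by
          push_cast [Nat.cast_sub (by omega : u ≤ v)]; ring
        rw [h4, modself p u hup]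
end

section
/- Fix an integer p ≥ 1. Let M be a set of pairs of non-negative integers with (0,0) ∉ M, and let G be the Grundy function of the associated move-set game. If G((x,y)) = mod(x+y, p) + p·(⌊x/p⌋ ⊕ ⌊y/p⌋) holds for all non-negative integers x, y, then M contains the set {(s,0) : s ≥ 1} ∪ {(0,t) : t ≥ 1} ∪ {(s,t) : s, t non-negative integers with 1 ≤ s+t ≤ p−1}. -/
/-- The moves of the game associated with a move set `M`: from `(x, y)` one can
move to `(x - s, y - t)` for any `(s, t) ∈ M` with `s ≤ x` and `t ≤ y`. -/
def moveSetMove (M : Set (ℕ × ℕ)) (pos : ℕ × ℕ) : Set (ℕ × ℕ) :=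
  {q | ∃ m ∈ M, m.1 ≤ pos.1 ∧ m.2 ≤ pos.2 ∧ q = (pos.1 - m.1, pos.2 - m.2)}

lemma zero_mem_of_mex_ne_zero (S : Set ℕ) (h : mex S ≠ 0) : 0 ∈ S := by
  by_contra h0
  exact h (Nat.eq_zero_of_le_zero (Nat.sInf_le h0))

theorem stmt_6 (p : ℕ) (hp : 1 ≤ p) (M : Set (ℕ × ℕ)) (hM : (0, 0) ∉ M)
    (G : ℕ × ℕ → ℕ) (hG : ∀ pos : ℕ × ℕ, G pos = mex (G '' moveSetMove M pos))
    (hGrundy : ∀ x y : ℕ, G (x, y) = (x + y) % p + p * ((x / p) ^^^ (y / p))) :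
    ({q : ℕ × ℕ | ∃ s : ℕ, 1 ≤ s ∧ q = (s, 0)} ∪
     {q : ℕ × ℕ | ∃ t : ℕ, 1 ≤ t ∧ q = (0, t)} ∪
     {q : ℕ × ℕ | ∃ s t : ℕ, 1 ≤ s + t ∧ s + t ≤ p - 1 ∧ q = (s, t)}) ⊆ M := by
  -- G(x,0) = x, G(0,y) = y
  have hx0 : ∀ x : ℕ, G (x, 0) = x := by
    intro x
    rw [hGrundy]
    simp [Nat.mod_add_div]
  have h0y : ∀ y : ℕ, G (0, y) = y := by
    intro y
    rw [hGrundy]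
    simp [Nat.mod_add_div]
  have hsmall : ∀ x y : ℕ, x + y < p → G (x, y) = x + y := by
    intro x y hxy
    rw [hGrundy, Nat.div_eq_of_lt (lt_of_le_of_lt (Nat.le_add_right x y) hxy),
      Nat.div_eq_of_lt (lt_of_le_of_lt (Nat.le_add_left y x) hxy),
      Nat.mod_eq_of_lt hxy]
    simp
  -- key: if G pos ≠ 0 then there is a move to a zero position
  have key : ∀ pos : ℕ × ℕ, G pos ≠ 0 →
      ∃ m ∈ M, m.1 ≤ pos.1 ∧ m.2 ≤ pos.2 ∧ G (pos.1 - m.1, pos.2 - m.2) = 0 := by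
    intro pos h
    rw [hG pos] at h
    obtain ⟨q, hq, hGq⟩ := zero_mem_of_mex_ne_zero _ h
    obtain ⟨m, hmM, h1, h2, hq'⟩ := hq
    exact ⟨m, hmM, h1, h2, by rw [← hq']; exact hGq⟩
  intro q hq
  rcases hq with (⟨s, hs, rfl⟩ | ⟨t, ht, rfl⟩) | ⟨s, t, hst1, hst2, rfl⟩
  · obtain ⟨m, hmM, h1, h2, h0⟩ := key (s, 0) (by rw [hx0]; omega)
    simp only at h1 h2
    have hm2 : m.2 = 0 := Nat.le_zero.mp h2
    rw [hm2] at h0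
    have h0 : G (s - m.1, 0) = 0 := by simpa using h0
    rw [hx0] at h0
    have : m.1 = s := by omega
    have : m = (s, 0) := Prod.ext this hm2
    rwa [← this]
  · obtain ⟨m, hmM, h1, h2, h0⟩ := key (0, t) (by rw [h0y]; omega)
    simp only at h1 h2
    have hm1 : m.1 = 0 := Nat.le_zero.mp h1
    rw [hm1] at h0
    have h0 : G (0, t - m.2) = 0 := by simpa using h0
    rw [h0y] at h0
    have : m.2 = t := by omega
    have : m = (0, t) := Prod.ext hm1 this
    rwa [← this]
  · have hlt : s + t < p := by omega
    obtain ⟨m, hmM, h1, h2, h0⟩ := key (s, t) (by rw [hsmall s t hlt]; omega)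
    simp only at h1 h2
    rw [hsmall _ _ (by omega)] at h0
    have : m = (s, t) := Prod.ext (by omega) (by omega)
    rwa [← this]
end

section
/- Fix an integer p ≥ 1. For all non-negative integers x and y, the Grundy value of the position (x,y) in generalized Ryūō Nim for p is 0 if and only if x+y ≡ 0 (mod p) and ⌊x/p⌋ = ⌊y/p⌋. Equivalently, the previous-player winning positions (P-positions) of generalized Ryūō Nim for p are exactly the positions (x,y) with x+y ≡ 0 (mod p) and ⌊x/p⌋ = ⌊y/p⌋. -/
/-- The claimed P-position condition. -/
def rcond (p x y : ℕ) : Prop := (x + y) % p = 0 ∧ x / p = y / p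

lemma sum_mod_iff {p b d : ℕ} (hb : b < p) (hd : d < p) :
    (b + d) % p = 0 ↔ b + d = 0 ∨ b + d = p := by
  constructor
  · intro h
    rcases lt_or_ge (b + d) p with h1 | h1
    · left; rwa [Nat.mod_eq_of_lt h1] at h
    · right
      rw [Nat.mod_eq_sub_mod h1, Nat.mod_eq_of_lt (by omega)] at h
      omega
  · rintro (h | h) <;> simp [h]

lemma rcond_iff {p x y : ℕ} (hp : 1 ≤ p) :
    rcond p x y ↔ x / p = y / p ∧ (x % p + y % p = 0 ∨ x % p + y % p = p) := by
  unfold rcond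
  rw [Nat.add_mod, sum_mod_iff (Nat.mod_lt _ hp) (Nat.mod_lt _ hp)]
  tauto

lemma rcond_mk {p a b d : ℕ} (hp : 1 ≤ p) (hb : b < p) (hd : d < p)
    (hs : b + d = 0 ∨ b + d = p) : rcond p (p * a + b) (p * a + d) := by
  have key : p * a + b + (p * a + d) = p * (a + a) + (b + d) := by ring
  constructor
  · rcases hs with h | h
    · rw [key, h, Nat.add_zero, Nat.mul_mod_right]
    · have h2 : p * a + b + (p * a + d) = p * (a + a + 1) := by rw [key, h]; ring
      rw [h2, Nat.mul_mod_right]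
  · rw [Nat.mul_add_div hp, Nat.mul_add_div hp, Nat.div_eq_of_lt hb, Nat.div_eq_of_lt hd]

lemma move_sum_lt {p x y : ℕ} {q : ℕ × ℕ} (hq : q ∈ ryuoMove p (x, y)) :
    q.1 + q.2 < x + y := by
  simp only [ryuoMove, Set.mem_union, Set.mem_setOf_eq] at hq
  rcases hq with (⟨u, hu, rfl⟩ | ⟨v, hv, rfl⟩) | ⟨s, t, hs1, hsx, ht1, hty, hst, rfl⟩ <;>
    simp <;> omega

lemma move_finite (p x y : ℕ) : (ryuoMove p (x, y)).Finite := by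
  apply Set.Finite.subset ((Set.finite_Iic x).prod (Set.finite_Iic y))
  rintro ⟨u, v⟩ hq
  simp only [ryuoMove, Set.mem_union, Set.mem_setOf_eq] at hq
  have : u ≤ x ∧ v ≤ y := by
    rcases hq with (⟨w, hw, he⟩ | ⟨w, hw, he⟩) | ⟨s, t, hs1, hsx, ht1, hty, hst, he⟩ <;>
      (obtain ⟨rfl, rfl⟩ := Prod.mk.injEq .. ▸ he; constructor <;> omega)
  exact Set.mem_prod.mpr ⟨Set.mem_Iic.mpr this.1, Set.mem_Iic.mpr this.2⟩

lemma claim1 {p x y : ℕ} (hp : 1 ≤ p) (h : rcond p x y) {q : ℕ × ℕ}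
    (hq : q ∈ ryuoMove p (x, y)) : ¬ rcond p q.1 q.2 := by
  simp only [ryuoMove, Set.mem_union, Set.mem_setOf_eq] at hq
  obtain ⟨hdiv, hres⟩ := (rcond_iff hp).mp h
  rcases hq with (⟨u, hu, rfl⟩ | ⟨v, hv, rfl⟩) | ⟨s, t, hs1, hsx, ht1, hty, hst, rfl⟩
  · show ¬ rcond p u y
    intro hc
    obtain ⟨hdiv', hres'⟩ := (rcond_iff hp).mp hc
    have e1 : u / p = x / p := by rw [hdiv', ← hdiv]
    have b1 : u % p < p := Nat.mod_lt _ hp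
    have b2 : x % p < p := Nat.mod_lt _ hp
    have b3 : y % p < p := Nat.mod_lt _ hp
    have e2 : u % p = x % p := by
      rcases hres with h1 | h1 <;> rcases hres' with h2 | h2 <;> omega
    have h1 := Nat.div_add_mod u p
    have h2 := Nat.div_add_mod x p
    rw [e1, e2] at h1
    omega
  · show ¬ rcond p x v
    intro hc
    obtain ⟨hdiv', hres'⟩ := (rcond_iff hp).mp hc
    have e1 : v / p = y / p := by rw [← hdiv', hdiv]
    have b1 : v % p < p := Nat.mod_lt _ hp
    have b2 : x % p < p := Nat.mod_lt _ hp
    have b3 : y % p < p := Nat.mod_lt _ hp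
    have e2 : v % p = y % p := by
      rcases hres with h1 | h1 <;> rcases hres' with h2 | h2 <;> omega
    have h1 := Nat.div_add_mod v p
    have h2 := Nat.div_add_mod y p
    rw [e1, e2] at h1
    omega
  · intro hc
    have hsum : (x + y) % p = 0 := h.1
    have hc1 : ((x - s) + (y - t)) % p = 0 := hc.1
    have hm : (x - s) + (y - t) = (x + y) - (s + t) := by omega
    rw [hm] at hc1
    have d1 : p ∣ x + y := Nat.dvd_of_mod_eq_zero hsum
    have d2 : p ∣ (x + y) - (s + t) := Nat.dvd_of_mod_eq_zero hc1
    have d3 : p ∣ s + t := by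
      have := Nat.dvd_sub d1 d2
      rwa [Nat.sub_sub_self (by omega)] at this
    have := Nat.le_of_dvd (by omega) d3
    omega

lemma claim2 {p x y : ℕ} (hp : 1 ≤ p) (h : ¬ rcond p x y) :
    ∃ q ∈ ryuoMove p (x, y), rcond p q.1 q.2 := by
  have hb : x % p < p := Nat.mod_lt _ hp
  have hd : y % p < p := Nat.mod_lt _ hp
  have hx := Nat.div_add_mod x p
  have hy := Nat.div_add_mod y p
  rcases Nat.lt_trichotomy (x / p) (y / p) with hlt | heq | hgt
  · -- x/p < y/p : reduce y
    have hr : (p - x % p) % p < p := Nat.mod_lt _ hp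
    refine ⟨(x, p * (x / p) + (p - x % p) % p),
      Or.inl (Or.inr ⟨p * (x / p) + (p - x % p) % p, ?_, rfl⟩), ?_⟩
    · have h1 : p * (x / p + 1) ≤ p * (y / p) := Nat.mul_le_mul_left p (by omega)
      have h2 : p * (x / p + 1) = p * (x / p) + p := by ring
      omega
    · have hsum : x % p + (p - x % p) % p = 0 ∨ x % p + (p - x % p) % p = p := by
        rcases Nat.eq_zero_or_pos (x % p) with h0 | h0
        · left; rw [h0, Nat.sub_zero, Nat.mod_self]
        · right
          have he : (p - x % p) % p = p - x % p := Nat.mod_eq_of_lt (by omega)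
          rw [he]; omega
      have := rcond_mk (a := x / p) hp hb hr hsum
      simpa only [hx] using this
  · -- equal quotients: residue case analysis
    rw [← heq] at hy
    have hres : ¬ (x % p + y % p = 0 ∨ x % p + y % p = p) := by
      intro hres
      exact h ((rcond_iff hp).mpr ⟨heq, hres⟩)
    push_neg at hres
    obtain ⟨hne0, hnep⟩ := hres
    rcases Nat.eq_zero_or_pos (x % p) with hb0 | hb1
    · -- x % p = 0, y % p ≥ 1: move y down to p * (x/p)
      refine ⟨(x, p * (x / p)), Or.inl (Or.inr ⟨p * (x / p), by omega, rfl⟩), ?_⟩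
      have := rcond_mk (a := x / p) (b := x % p) (d := 0) hp hb hp (Or.inl (by omega))
      rw [hx] at this
      simpa using this
    rcases Nat.eq_zero_or_pos (y % p) with hd0 | hd1
    · refine ⟨(p * (x / p), y), Or.inl (Or.inl ⟨p * (x / p), by omega, rfl⟩), ?_⟩
      have := rcond_mk (a := x / p) (b := 0) (d := y % p) hp hp hd (Or.inl (by omega))
      rw [hy] at this
      simpa using this
    rcases Nat.lt_or_ge (x % p + y % p) p with hsl | hsg
    · -- diagonal move
      refine ⟨(x - x % p, y - y % p),
        Or.inr ⟨x % p, y % p, hb1, Nat.mod_le x p, hd1, Nat.mod_le y p, by omega, rfl⟩, ?_⟩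
      have e1 : x - x % p = p * (x / p) := by omega
      have e2 : y - y % p = p * (x / p) := by omega
      show rcond p (x - x % p) (y - y % p)
      rw [e1, e2]
      simpa using rcond_mk (a := x / p) (b := 0) (d := 0) hp hp hp (Or.inl rfl)
    · -- x % p + y % p > p : reduce x
      have hgtp : x % p + y % p > p := by omega
      refine ⟨(p * (x / p) + (p - y % p), y),
        Or.inl (Or.inl ⟨p * (x / p) + (p - y % p), by omega, rfl⟩), ?_⟩
      have := rcond_mk (a := x / p) (b := p - y % p) (d := y % p) hp (by omega) hd
        (Or.inr (by omega))
      simpa only [hy] using this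
  · -- y/p < x/p : reduce x
    have hr : (p - y % p) % p < p := Nat.mod_lt _ hp
    refine ⟨(p * (y / p) + (p - y % p) % p, y),
      Or.inl (Or.inl ⟨p * (y / p) + (p - y % p) % p, ?_, rfl⟩), ?_⟩
    · have h1 : p * (y / p + 1) ≤ p * (x / p) := Nat.mul_le_mul_left p (by omega)
      have h2 : p * (y / p + 1) = p * (y / p) + p := by ring
      omega
    · have hsum : (p - y % p) % p + y % p = 0 ∨ (p - y % p) % p + y % p = p := by
        rcases Nat.eq_zero_or_pos (y % p) with h0 | h0
        · left; rw [h0, Nat.sub_zero, Nat.mod_self]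
        · right
          have he : (p - y % p) % p = p - y % p := Nat.mod_eq_of_lt (by omega)
          rw [he]; omega
      have := rcond_mk (a := y / p) hp hr hd hsum
      simpa only [hy] using this

/-- A position is a P-position exactly when its Grundy value is `0`. -/
theorem stmt_7 (p : ℕ) (hp : 1 ≤ p) (G : ℕ × ℕ → ℕ)
    (hG : ∀ pos : ℕ × ℕ, G pos = mex (G '' ryuoMove p pos)) :
    ∀ x y : ℕ, G (x, y) = 0 ↔ (x + y) % p = 0 ∧ x / p = y / p := by
  have main : ∀ n x y, x + y = n → (G (x, y) = 0 ↔ rcond p x y) := by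
    intro n
    induction n using Nat.strong_induction_on with
    | _ n ih =>
      intro x y hxy
      have IH : ∀ q ∈ ryuoMove p (x, y), (G q = 0 ↔ rcond p q.1 q.2) := by
        intro q hq
        have := ih (q.1 + q.2) (hxy ▸ move_sum_lt hq) q.1 q.2 rfl
        simpa using this
      rw [hG (x, y)]
      constructor
      · intro h0
        by_contra hc
        obtain ⟨q, hq, hcq⟩ := claim2 hp hc
        have hGq : G q = 0 := (IH q hq).mpr hcq
        have h0mem : (0 : ℕ) ∈ G '' ryuoMove p (x, y) := ⟨q, hq, hGq⟩
        have hne : {m : ℕ | m ∉ G '' ryuoMove p (x, y)}.Nonempty := by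
          have hfin : (G '' ryuoMove p (x, y)).Finite := (move_finite p x y).image G
          exact hfin.infinite_compl.nonempty
        have hmem := Nat.sInf_mem hne
        simp only [mex] at h0
        rw [h0] at hmem
        exact hmem h0mem
      · intro hcxy
        have h0n : (0 : ℕ) ∈ {m : ℕ | m ∉ G '' ryuoMove p (x, y)} := by
          rintro ⟨q, hq, hGq⟩
          exact claim1 hp hcxy hq ((IH q hq).mp hGq)
        simp only [mex]
        exact Nat.sInf_eq_zero.mpr (Or.inl h0n)
  exact fun x y => main (x + y) x y rfl
end

section
/- Fix an integer p ≥ 2. For every position (x,y,1) of generalized Ryūō Nim for p with a pass move such that x+y ≥ 1 and (x,y,1) ∉ 𝒫₁, one has move((x,y,1)) ∩ (𝒫₀ ∪ 𝒫₁ ∪ {(0,0,1)}) ≠ ∅; that is, from every such position there is a move to a position of 𝒫₀ ∪ 𝒫₁ ∪ {(0,0,1)}. -/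
/-- `𝒫₁₁ = {(m+1, p−m, 1) : 0 ≤ m ≤ p−1}`. -/
def P11 (p : ℕ) : Set (ℕ × ℕ × ℕ) :=
  {q | ∃ m : ℕ, m ≤ p - 1 ∧ q = (m + 1, p - m, 1)}

/-- `𝒫₁₂ = {(pn+1, pn+1, 1) : n ≥ 1}`. -/
def P12 (p : ℕ) : Set (ℕ × ℕ × ℕ) :=
  {q | ∃ n : ℕ, 1 ≤ n ∧ q = (p * n + 1, p * n + 1, 1)}

/-- `𝒫₁₃ = {(k+pn, p+2−k+pn, 1) : n ≥ 1, 2 ≤ k ≤ p}`. -/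
def P13 (p : ℕ) : Set (ℕ × ℕ × ℕ) :=
  {q | ∃ n k : ℕ, 1 ≤ n ∧ 2 ≤ k ∧ k ≤ p ∧ q = (k + p * n, p + 2 - k + p * n, 1)}

/-- `𝒫₁ = 𝒫₁₁ ∪ 𝒫₁₂ ∪ 𝒫₁₃`. -/
def P1 (p : ℕ) : Set (ℕ × ℕ × ℕ) := P11 p ∪ P12 p ∪ P13 p

/-- `𝒫₀ = {(x, y, 0) : x + y ≡ 0 (mod p) and ⌊x/p⌋ = ⌊y/p⌋}`. -/
def P0 (p : ℕ) : Set (ℕ × ℕ × ℕ) :=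
  {q | ∃ x y : ℕ, (x + y) % p = 0 ∧ x / p = y / p ∧ q = (x, y, 0)}

/-- The moves of generalized Ryūō Nim for `p` with a pass move, from a position
`(x, y, e)` where `e = 1` iff the pass move is still available. -/
def passMove (p : ℕ) : ℕ × ℕ × ℕ → Set (ℕ × ℕ × ℕ)
  | (x, y, e) =>
    if x + y = 0 then ∅ else
      {q | ∃ u < x, q = (u, y, e)} ∪
      {q | ∃ v < y, q = (x, v, e)} ∪
      {q | ∃ s t : ℕ, 1 ≤ s ∧ s ≤ x ∧ 1 ≤ t ∧ t ≤ y ∧ s + t ≤ p - 1 ∧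
            q = (x - s, y - t, e)} ∪
      (if e = 1 then {(x, y, 0)} else ∅)

lemma mem_move_left {p x y e u : ℕ} (hx : x + y ≠ 0) (h : u < x) :
    ((u, y, e) : ℕ × ℕ × ℕ) ∈ passMove p (x, y, e) := by
  simp only [passMove, if_neg hx, Set.mem_union, Set.mem_setOf_eq]
  exact Or.inl <| Or.inl <| Or.inl ⟨u, h, rfl⟩

lemma mem_move_right {p x y e v : ℕ} (hx : x + y ≠ 0) (h : v < y) :
    ((x, v, e) : ℕ × ℕ × ℕ) ∈ passMove p (x, y, e) := by
  simp only [passMove, if_neg hx, Set.mem_union, Set.mem_setOf_eq]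
  exact Or.inl <| Or.inl <| Or.inr ⟨v, h, rfl⟩

lemma mem_move_diag {p x y e s t : ℕ} (hx : x + y ≠ 0) (hs1 : 1 ≤ s) (hsx : s ≤ x)
    (ht1 : 1 ≤ t) (hty : t ≤ y) (hst : s + t ≤ p - 1) :
    ((x - s, y - t, e) : ℕ × ℕ × ℕ) ∈ passMove p (x, y, e) := by
  simp only [passMove, if_neg hx, Set.mem_union, Set.mem_setOf_eq]
  exact Or.inl <| Or.inr ⟨s, t, hs1, hsx, ht1, hty, hst, rfl⟩

lemma mem_move_pass {p x y : ℕ} (hx : x + y ≠ 0) :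
    ((x, y, 0) : ℕ × ℕ × ℕ) ∈ passMove p (x, y, 1) := by
  simp only [passMove, if_neg hx, Set.mem_union, Set.mem_setOf_eq]
  right; simp

lemma memP11 {p : ℕ} {q : ℕ × ℕ × ℕ} {m : ℕ} (hm : m ≤ p - 1)
    (hq : q = (m + 1, p - m, 1)) : q ∈ P1 p :=
  Set.mem_union_left _ (Set.mem_union_left _ ⟨m, hm, hq⟩)

lemma memP12 {p : ℕ} {q : ℕ × ℕ × ℕ} {n : ℕ} (hn : 1 ≤ n)
    (hq : q = (p * n + 1, p * n + 1, 1)) : q ∈ P1 p :=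
  Set.mem_union_left _ (Set.mem_union_right _ ⟨n, hn, hq⟩)

lemma memP13 {p : ℕ} {q : ℕ × ℕ × ℕ} {n k : ℕ} (hn : 1 ≤ n) (hk2 : 2 ≤ k) (hkp : k ≤ p)
    (hq : q = (k + p * n, p + 2 - k + p * n, 1)) : q ∈ P1 p :=
  Set.mem_union_right _ ⟨n, k, hn, hk2, hkp, hq⟩

lemma tgt_P0 {p : ℕ} {q : ℕ × ℕ × ℕ} (h : q ∈ P0 p) :
    q ∈ P0 p ∪ P1 p ∪ {((0, 0, 1) : ℕ × ℕ × ℕ)} :=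
  Set.mem_union_left _ (Set.mem_union_left _ h)

lemma tgt_P1 {p : ℕ} {q : ℕ × ℕ × ℕ} (h : q ∈ P1 p) :
    q ∈ P0 p ∪ P1 p ∪ {((0, 0, 1) : ℕ × ℕ × ℕ)} :=
  Set.mem_union_left _ (Set.mem_union_right _ h)

lemma tgt_zero {p : ℕ} {q : ℕ × ℕ × ℕ} (h : q = (0, 0, 1)) :
    q ∈ P0 p ∪ P1 p ∪ {((0, 0, 1) : ℕ × ℕ × ℕ)} :=
  Set.mem_union_right _ h

lemma P1_swap {p : ℕ} {q : ℕ × ℕ × ℕ} (hp : 2 ≤ p) (h : q ∈ P1 p) :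
    (q.2.1, q.1, q.2.2) ∈ P1 p := by
  simp only [P1, P11, P12, P13, Set.mem_union, Set.mem_setOf_eq] at h
  rcases h with (⟨m, hm, rfl⟩ | ⟨n, hn, rfl⟩) | ⟨n, k, hn, hk2, hkp, rfl⟩
  · refine memP11 (m := p - m - 1) (by omega) ?_
    simp only [Prod.mk.injEq, and_true, true_and]
    omega
  · exact memP12 hn rfl
  · refine memP13 (n := n) (k := p + 2 - k) hn (by omega) (by omega) ?_
    obtain ⟨w, hw⟩ : ∃ w, p * n = w := ⟨_, rfl⟩
    rw [hw]
    simp only [Prod.mk.injEq, and_true, true_and]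
    omega

lemma tgt_swap {p : ℕ} {q : ℕ × ℕ × ℕ} (hp : 2 ≤ p)
    (h : q ∈ P0 p ∪ P1 p ∪ {((0, 0, 1) : ℕ × ℕ × ℕ)}) :
    (q.2.1, q.1, q.2.2) ∈ P0 p ∪ P1 p ∪ {((0, 0, 1) : ℕ × ℕ × ℕ)} := by
  rcases h with (h | h) | h
  · obtain ⟨a, b, h1, h2, rfl⟩ := h
    exact tgt_P0 ⟨b, a, by rwa [Nat.add_comm], h2.symm, rfl⟩
  · exact tgt_P1 (P1_swap hp h)
  · simp only [Set.mem_singleton_iff] at h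
    subst h
    exact tgt_zero rfl

lemma passMove_swap {p x y e : ℕ} {q : ℕ × ℕ × ℕ} (h : q ∈ passMove p (x, y, e)) :
    (q.2.1, q.1, q.2.2) ∈ passMove p (y, x, e) := by
  by_cases h0 : x + y = 0
  · simp only [passMove, if_pos h0] at h
    exact h.elim
  · have h0' : y + x ≠ 0 := by omega
    simp only [passMove, if_neg h0, if_neg h0', Set.mem_union, Set.mem_setOf_eq] at h ⊢
    rcases h with (((⟨u, hu, rfl⟩ | ⟨v, hv, rfl⟩) | ⟨s, t, hs1, hsx, ht1, hty, hst, rfl⟩) | hpass)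
    · exact Or.inl <| Or.inl <| Or.inr ⟨u, hu, rfl⟩
    · exact Or.inl <| Or.inl <| Or.inl ⟨v, hv, rfl⟩
    · exact Or.inl <| Or.inr ⟨t, s, ht1, hty, hs1, hsx, by omega, rfl⟩
    · split at hpass
      · next he =>
        subst he
        simp only [Set.mem_singleton_iff] at hpass
        subst hpass
        exact Or.inr (by simp)
      · exact hpass.elim

lemma key (p : ℕ) (hp : 2 ≤ p) (x y : ℕ) (hxy : x ≤ y) (h1 : 1 ≤ x + y)
    (hn : ((x, y, 1) : ℕ × ℕ × ℕ) ∉ P1 p) :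
    (passMove p (x, y, 1) ∩ (P0 p ∪ P1 p ∪ {((0, 0, 1) : ℕ × ℕ × ℕ)})).Nonempty := by
  have hne : x + y ≠ 0 := by omega
  by_cases hx0 : x = 0
  · subst hx0
    exact ⟨(0, 0, 1), mem_move_right hne (by omega), tgt_zero rfl⟩
  -- now x ≥ 1, y ≥ x ≥ 1
  by_cases ha : x + y ≤ p - 1
  · refine ⟨(x - x, y - y, 1),
      mem_move_diag hne (by omega) le_rfl (by omega) le_rfl (by omega), tgt_zero ?_⟩
    simp
  by_cases hb : x + y = p
  · refine ⟨(x, y, 0), mem_move_pass hne, tgt_P0 ⟨x, y, by simp [hb], ?_, rfl⟩⟩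
    rw [Nat.div_eq_of_lt (by omega), Nat.div_eq_of_lt (by omega)]
  by_cases hc : x + y = p + 1
  · exact absurd (memP11 (m := x - 1) (by omega)
      (by simp only [Prod.mk.injEq, and_true, true_and]; omega)) hn
  -- now x + y ≥ p + 2
  by_cases hd : x ≤ p
  · refine ⟨(x, p + 1 - x, 1), mem_move_right hne (by omega),
      tgt_P1 (memP11 (m := x - 1) (by omega) ?_)⟩
    simp only [Prod.mk.injEq, and_true, true_and]
    omega
  -- now x ≥ p + 1
  obtain ⟨n, r, hr, hx⟩ : ∃ n r, r < p ∧ x = p * n + r :=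
    ⟨x / p, x % p, Nat.mod_lt _ (by omega), (Nat.div_add_mod x p).symm⟩
  by_cases hr1 : r = 1
  · subst hr1
    have hn1 : n ≠ 0 := by rintro rfl; simp at hx; omega
    by_cases hyx : y = x
    · exact absurd (memP12 (n := n) (by omega) (by rw [hyx, hx])) hn
    · refine ⟨(x, x, 1), mem_move_right hne (by omega),
        tgt_P1 (memP12 (n := n) (by omega) (by rw [hx]))⟩
  -- unified: x = m + k with m = p * n', 2 ≤ k ≤ p, n' ≥ 1
  obtain ⟨n', k, m, hn', hk2, hkp, hm, hxk⟩ :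
      ∃ n' k m, 1 ≤ n' ∧ 2 ≤ k ∧ k ≤ p ∧ p * n' = m ∧ x = m + k := by
    by_cases hr0 : r = 0
    · subst hr0
      have hn1 : n ≠ 0 := by rintro rfl; simp at hx; omega
      have hn2 : n ≠ 1 := by rintro rfl; rw [Nat.mul_one] at hx; omega
      obtain ⟨n0, rfl⟩ : ∃ n0, n = n0 + 1 := ⟨n - 1, by omega⟩
      rw [Nat.mul_succ] at hx
      refine ⟨n0, p, p * n0, by omega, hp, le_rfl, rfl, by omega⟩
    · have hn1 : n ≠ 0 := by rintro rfl; simp at hx; omega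
      exact ⟨n, r, p * n, by omega, by omega, by omega, rfl, hx⟩
  rcases lt_trichotomy (p + 2 - k + m) y with hlt | heq | hgt
  · refine ⟨(x, p + 2 - k + m, 1), mem_move_right hne hlt,
      tgt_P1 (memP13 hn' hk2 hkp ?_)⟩
    rw [hm]
    simp only [Prod.mk.injEq, and_true, true_and]
    omega
  · refine absurd (memP13 hn' hk2 hkp ?_) hn
    rw [hm]
    simp only [Prod.mk.injEq, and_true, true_and]
    omega
  · refine ⟨(x - (x - (m + 1)), y - (y - (m + 1)), 1),
      mem_move_diag hne (by omega) (by omega) (by omega) (by omega) (by omega),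
      tgt_P1 (memP12 hn' ?_)⟩
    rw [hm]
    simp only [Prod.mk.injEq, and_true, true_and]
    omega

theorem stmt_10 (p : ℕ) (hp : 2 ≤ p) :
    ∀ x y : ℕ, 1 ≤ x + y → (x, y, 1) ∉ P1 p →
      (passMove p (x, y, 1) ∩ (P0 p ∪ P1 p ∪ {(0, 0, 1)})).Nonempty := by
  intro x y h1 hn
  rcases le_total x y with h | h
  · exact key p hp x y h h1 hn
  · obtain ⟨q, hq1, hq2⟩ := key p hp y x h (by omega)
      (fun hmem => hn (P1_swap hp hmem))
    exact ⟨(q.2.1, q.1, q.2.2), passMove_swap hq1, tgt_swap hp hq2⟩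
end

section
/- Fix integers p ≥ 2 and q ≥ 2 with q ≡ 0 (mod p). For all non-negative integers x and y, the Grundy value of (x,y) in the (p,q)-restricted Ryūō Nim is 𝒢(x,y) = mod(mod(x,q) + mod(y,q), p) + p·(⌊mod(x,q)/p⌋ ⊕ ⌊mod(y,q)/p⌋). -/
/-- Moves of the restricted Ryūō Nim: diagonal moves remove a total of at most
`p - 1` tokens, horizontal moves remove at most `q - 1` tokens, and vertical
moves remove at most `r - 1` tokens. -/
def resMove (p q r : ℕ) (pos : ℕ × ℕ) : Set (ℕ × ℕ) :=
  {a | ∃ s : ℕ, 1 ≤ s ∧ s ≤ pos.1 ∧ s ≤ q - 1 ∧ a = (pos.1 - s, pos.2)} ∪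
  {a | ∃ t : ℕ, 1 ≤ t ∧ t ≤ pos.2 ∧ t ≤ r - 1 ∧ a = (pos.1, pos.2 - t)} ∪
  {a | ∃ s t : ℕ, 1 ≤ s ∧ s ≤ pos.1 ∧ 1 ≤ t ∧ t ≤ pos.2 ∧ s + t ≤ p - 1 ∧
        a = (pos.1 - s, pos.2 - t)}

theorem mex_eq {S : Set ℕ} {v : ℕ} (hv : v ∉ S) (hlt : ∀ k < v, k ∈ S) : mex S = v :=
  le_antisymm (Nat.sInf_le hv)
    (le_of_not_gt fun h => Nat.sInf_mem (s := {n | n ∉ S}) ⟨v, hv⟩ (hlt _ h))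

theorem eq_of_eq_image_moves {α β : Type*} (moves : α → Set α) (μ : α → ℕ)
    (hμ : ∀ a, ∀ b ∈ moves a, μ b < μ a) (Φ : Set β → β) {G F : α → β}
    (hG : ∀ a, G a = Φ (G '' moves a)) (hF : ∀ a, F a = Φ (F '' moves a)) : G = F := by
  funext a
  induction a using (measure μ).wf.induction with
  | h a ih => rw [hG, hF, Set.image_congr fun b hb => ih b (hμ a b hb)]

theorem sub_mod_ne_mod {n m d : ℕ} (hd : 0 < d) (hdm : d < m) (hdn : d ≤ n) :
    (n - d) % m ≠ n % m := by
  intro h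
  have hm : d % m = 0 := by
    simpa [Nat.sub_sub_self hdn] using Nat.sub_mod_eq_zero_of_mod_eq h.symm
  rw [Nat.mod_eq_of_lt hdm] at hm
  omega

theorem sub_div_eq_of_le_mod {n m d : ℕ} (hm : 0 < m) (hd : d ≤ n % m) :
    (n - d) / m = n / m := by
  refine ((Nat.div_mod_unique (c := n % m - d) hm).2 ⟨?_, ?_⟩).1
  · have := Nat.div_add_mod n m
    omega
  · have := Nat.mod_lt n hm
    omega

section resMove

variable {p q r : ℕ}

theorem add_lt_of_mem_resMove {pos z : ℕ × ℕ} (hz : z ∈ resMove p q r pos) :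
    z.1 + z.2 < pos.1 + pos.2 := by
  rcases hz with (⟨s, _, _, _, rfl⟩ | ⟨t, _, _, _, rfl⟩) | ⟨s, t, _, _, _, _, _, rfl⟩ <;>
    simp only <;> omega

theorem swap_mem_resMove {pos z : ℕ × ℕ} (hz : z ∈ resMove p q r pos) :
    z.swap ∈ resMove p r q pos.swap := by
  rcases hz with (⟨s, h1, h2, h3, rfl⟩ | ⟨t, h1, h2, h3, rfl⟩) | ⟨s, t, h1, h2, h3, h4, h5, rfl⟩
  · exact Or.inl (Or.inr ⟨s, h1, h2, h3, rfl⟩)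
  · exact Or.inl (Or.inl ⟨t, h1, h2, h3, rfl⟩)
  · exact Or.inr ⟨t, s, h3, h4, h1, h2, by omega, rfl⟩

theorem sub_mem_resMove {x y s t : ℕ} (hs : s ≤ x) (ht : t ≤ y) (hst : 0 < s + t)
    (hstp : s + t < p) (hpq : p ≤ q) (hpr : p ≤ r) : (x - s, y - t) ∈ resMove p q r (x, y) := by
  rcases Nat.eq_zero_or_pos s with rfl | hs0
  · exact Or.inl (Or.inr ⟨t, by omega, ht, by omega, rfl⟩)
  rcases Nat.eq_zero_or_pos t with rfl | ht0
  · exact Or.inl (Or.inl ⟨s, hs0, hs, by omega, rfl⟩)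
  · exact Or.inr ⟨s, t, hs0, hs, ht0, ht, by omega, rfl⟩

end resMove

def ryuoValue (p q : ℕ) (pos : ℕ × ℕ) : ℕ :=
  (pos.1 % q + pos.2 % q) % p + p * ((pos.1 % q / p) ^^^ (pos.2 % q / p))

section ryuoValue

variable {p q : ℕ}

theorem ryuoValue_comm (a b : ℕ) : ryuoValue p q (b, a) = ryuoValue p q (a, b) := by
  simp only [ryuoValue, Nat.add_comm (b % q), Nat.xor_comm (b % q / p)]

theorem ryuoValue_mod_fst (x y : ℕ) : ryuoValue p q (x % q, y) = ryuoValue p q (x, y) := by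
  simp only [ryuoValue, Nat.mod_mod]

theorem ryuoValue_mod (hpq : p ∣ q) (pos : ℕ × ℕ) :
    ryuoValue p q pos % p = (pos.1 + pos.2) % p := by
  rw [ryuoValue, Nat.add_mul_mod_self_left, Nat.mod_mod, Nat.add_mod,
    Nat.mod_mod_of_dvd _ hpq, Nat.mod_mod_of_dvd _ hpq, ← Nat.add_mod]

theorem ryuoValue_div (hp : 0 < p) (pos : ℕ × ℕ) :
    ryuoValue p q pos / p = (pos.1 % q / p) ^^^ (pos.2 % q / p) := by
  rw [ryuoValue, Nat.add_mul_div_left _ _ hp, Nat.div_eq_of_lt (Nat.mod_lt _ hp), Nat.zero_add]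

theorem mod_eq_of_ryuoValue_eq (hp : 0 < p) (hpq : p ∣ q) {x x' y : ℕ}
    (h : ryuoValue p q (x', y) = ryuoValue p q (x, y)) : x' % q = x % q := by
  have hdiv := congrArg (· / p) h
  have hmod := congrArg (· % p) h
  simp only [ryuoValue_div hp, ryuoValue_mod hpq, Nat.xor_left_inj] at hdiv hmod
  refine Nat.ext_div_mod hdiv ?_
  rw [Nat.mod_mod_of_dvd _ hpq, Nat.mod_mod_of_dvd _ hpq]
  exact Nat.ModEq.add_right_cancel' y hmod

theorem ryuoValue_notMem_image (hp : 0 < p) (hpq : p ∣ q) (hq : 0 < q) (x y : ℕ) :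
    ryuoValue p q (x, y) ∉ ryuoValue p q '' resMove p q q (x, y) := by
  have hpq' := Nat.le_of_dvd hq hpq
  rintro ⟨z, (⟨s, hs, hsx, hsq, rfl⟩ | ⟨t, ht, hty, htq, rfl⟩) | ⟨s, t, _, _, _, _, hst, rfl⟩, h⟩
  · exact sub_mod_ne_mod hs (by omega) hsx (mod_eq_of_ryuoValue_eq hp hpq h)
  · rw [← ryuoValue_comm, ← ryuoValue_comm x] at h
    exact sub_mod_ne_mod ht (by omega) hty (mod_eq_of_ryuoValue_eq hp hpq h)
  · have hmod := congrArg (· % p) h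
    simp only [ryuoValue_mod hpq] at hmod
    rw [show x - s + (y - t) = x + y - (s + t) by omega] at hmod
    exact sub_mod_ne_mod (by omega) (by omega) (by omega) hmod

theorem exists_move_of_div_eq (hp : 0 < p) (hpq : p ∣ q) (hq : 0 < q) {x y k : ℕ}
    (hk : k < ryuoValue p q (x, y)) (hdiv : k / p = ryuoValue p q (x, y) / p) :
    ∃ z ∈ resMove p q q (x, y), ryuoValue p q z = k := by
  set a := x % q
  set b := y % q
  have hL : (x + y) % p = (a % p + b % p) % p := by
    rw [Nat.add_mod, ← Nat.mod_mod_of_dvd x hpq, ← Nat.mod_mod_of_dvd y hpq]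
  have hlow : k % p < (x + y) % p := by
    have hk' := Nat.div_add_mod k p
    have hv := Nat.div_add_mod (ryuoValue p q (x, y)) p
    have hv_mod : ryuoValue p q (x, y) % p = (x + y) % p := ryuoValue_mod hpq (x, y)
    rw [hdiv] at hk'
    omega
  -- split the decrease `d` of the low digit between the two piles, within their current blocks
  set d := (x + y) % p - k % p
  set s := min d (a % p)
  set t := d - s
  have hs : s ≤ a % p := min_le_right _ _
  have ht : t ≤ b % p := by have := Nat.mod_le (a % p + b % p) p; omega
  have hdp : d < p := by have := Nat.mod_lt (x + y) hp; omega
  have hst : s + t = d := Nat.add_sub_cancel' (min_le_left _ _)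
  have hsa : s ≤ a := hs.trans (Nat.mod_le _ _)
  have htb : t ≤ b := ht.trans (Nat.mod_le _ _)
  have hsx : s ≤ x := hsa.trans (Nat.mod_le _ _)
  have hty : t ≤ y := htb.trans (Nat.mod_le _ _)
  refine ⟨(x - s, y - t), sub_mem_resMove hsx hty (by omega) (by omega) (Nat.le_of_dvd hq hpq)
    (Nat.le_of_dvd hq hpq), Nat.ext_div_mod (n := p) ?_ ?_⟩
  · rw [hdiv, ryuoValue_div hp, ryuoValue_div hp, ← Nat.mod_sub_of_le hsa,
      ← Nat.mod_sub_of_le htb, sub_div_eq_of_le_mod hp hs, sub_div_eq_of_le_mod hp ht]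
  · rw [ryuoValue_mod hpq, show x - s + (y - t) = x + y - d by omega,
      ← Nat.mod_sub_of_le (by omega)]
    omega

theorem exists_fst_move_of_xor_lt (hp : 0 < p) (hpq : p ∣ q) (hq : 0 < q) {x y k : ℕ}
    (hk : k / p ^^^ (y % q / p) < x % q / p) :
    ∃ z ∈ resMove p q q (x, y), ryuoValue p q z = k := by
  set c := k / p ^^^ (y % q / p)
  -- the target residue of the first pile: block `c`, offset making the low digit `k % p`
  set a' := (k + (p - 1) * y) % p + p * c
  have ha' : a' < x % q := by
    have := Nat.mod_lt (k + (p - 1) * y) hp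
    have := Nat.div_add_mod (x % q) p
    have : p * (c + 1) ≤ p * (x % q / p) := Nat.mul_le_mul_left _ hk
    rw [Nat.mul_add] at this
    omega
  have hmove : (x - (x % q - a'), y) ∈ resMove p q q (x, y) :=
    Or.inl (Or.inl ⟨x % q - a', by omega, by have := Nat.mod_le x q; omega,
      by have := Nat.mod_lt x hq; omega, rfl⟩)
  refine ⟨_, hmove, ?_⟩
  rw [← ryuoValue_mod_fst, ← Nat.mod_sub_of_le (Nat.sub_le _ _),
    Nat.sub_sub_self ha'.le]
  refine Nat.ext_div_mod (n := p) ?_ ?_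
  · rw [ryuoValue_div hp, Nat.mod_eq_of_lt (ha'.trans (Nat.mod_lt x hq)),
      Nat.add_mul_div_left _ _ hp, Nat.div_eq_of_lt (Nat.mod_lt _ hp), Nat.zero_add,
      Nat.xor_assoc, Nat.xor_self, Nat.xor_zero]
  · rw [ryuoValue_mod hpq, Nat.add_mod, Nat.add_mul_mod_self_left, Nat.mod_mod,
      ← Nat.add_mod, Nat.add_assoc, ← Nat.add_one_mul, Nat.sub_add_cancel hp,
      Nat.add_mul_mod_self_left]

theorem mem_image_of_lt_ryuoValue (hp : 0 < p) (hpq : p ∣ q) (hq : 0 < q) {x y k : ℕ}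
    (hk : k < ryuoValue p q (x, y)) : k ∈ ryuoValue p q '' resMove p q q (x, y) := by
  have hdiv : k / p ≤ ryuoValue p q (x, y) / p := Nat.div_le_div_right hk.le
  rcases hdiv.eq_or_lt with hdiv | hdiv
  · exact exists_move_of_div_eq hp hpq hq hk hdiv
  rw [ryuoValue_div hp] at hdiv
  rcases Nat.lt_xor_cases hdiv with h | h
  · exact exists_fst_move_of_xor_lt hp hpq hq h
  · obtain ⟨z, hz, hzk⟩ := exists_fst_move_of_xor_lt hp hpq hq h
    exact ⟨z.swap, swap_mem_resMove hz, hzk ▸ ryuoValue_comm z.1 z.2⟩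

theorem ryuoValue_eq_mex (hp : 0 < p) (hpq : p ∣ q) (hq : 0 < q) (pos : ℕ × ℕ) :
    ryuoValue p q pos = mex (ryuoValue p q '' resMove p q q pos) :=
  (mex_eq (ryuoValue_notMem_image hp hpq hq pos.1 pos.2)
    fun _ hk => mem_image_of_lt_ryuoValue hp hpq hq hk).symm

end ryuoValue

theorem stmt_12_general (p q : ℕ) (hq : 2 ≤ q) (hqp : q % p = 0)
    (G : ℕ × ℕ → ℕ) (hG : ∀ pos : ℕ × ℕ, G pos = mex (G '' resMove p q q pos)) :
    ∀ x y : ℕ, G (x, y) =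
      (x % q + y % q) % p + p * ((x % q / p) ^^^ (y % q / p)) := by
  have hp : 0 < p := Nat.pos_of_ne_zero fun h => by rw [h, Nat.mod_zero] at hqp; omega
  have hpq : p ∣ q := Nat.dvd_of_mod_eq_zero hqp
  have hG_eq : G = ryuoValue p q :=
    eq_of_eq_image_moves (resMove p q q) (fun pos => pos.1 + pos.2)
      (fun _ _ hz => add_lt_of_mem_resMove hz) mex hG (ryuoValue_eq_mex hp hpq (by omega))
  intro x y
  rw [hG_eq, ryuoValue]

theorem stmt_12 (p q : ℕ) (hp : 2 ≤ p) (hq : 2 ≤ q) (hqp : q % p = 0)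
    (G : ℕ × ℕ → ℕ) (hG : ∀ pos : ℕ × ℕ, G pos = mex (G '' resMove p q q pos)) :
    ∀ x y : ℕ, G (x, y) =
      (x % q + y % q) % p + p * ((x % q / p) ^^^ (y % q / p)) :=
  stmt_12_general p q hq hqp G hG
end

section
/- Fix integers p ≥ 2, q ≥ 2 and r ≥ 2 with q ≡ 0 (mod p) and r ≡ 0 (mod p). For all non-negative integers x and y, the Grundy value of (x,y) in the (p,q,r)-restricted Ryūō Nim is 𝒢(x,y) = mod(mod(x,q) + mod(y,r), p) + p·(⌊mod(x,q)/p⌋ ⊕ ⌊mod(y,r)/p⌋). -/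
/-- The conjectured Grundy value. -/
private def fval (p q r x y : ℕ) : ℕ :=
  (x % q + y % r) % p + p * ((x % q / p) ^^^ (y % r / p))

private lemma mex_eq_s14 {S : Set ℕ} {m : ℕ} (h1 : m ∉ S) (h2 : ∀ k, k < m → k ∈ S) :
    mex S = m := by
  have hm : m ∈ {n : ℕ | n ∉ S} := h1
  refine le_antisymm (Nat.sInf_le hm) ?_
  by_contra h
  push_neg at h
  have hmem : sInf {n : ℕ | n ∉ S} ∈ {n : ℕ | n ∉ S} := Nat.sInf_mem ⟨m, hm⟩
  exact hmem (h2 _ h)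

private lemma mySubMod {n d m : ℕ} (hm : 0 < m) (h : d ≤ n % m) :
    (n - d) % m = n % m - d := by
  have h1 := Nat.mod_add_div n m
  have hlt := Nat.mod_lt n hm
  have h2 : n - d = (n % m - d) + m * (n / m) := by omega
  rw [h2, Nat.add_mul_mod_self_left, Nat.mod_eq_of_lt (by omega)]

private lemma mySubDiv {n d m : ℕ} (hm : 0 < m) (h : d ≤ n % m) :
    (n - d) / m = n / m := by
  have h1 := Nat.mod_add_div n m
  have hlt := Nat.mod_lt n hm
  have h2 : n - d = (n % m - d) + m * (n / m) := by omega
  rw [h2, Nat.add_mul_div_left _ _ hm, Nat.div_eq_of_lt (by omega), Nat.zero_add]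

private lemma decomp_inj {p c1 g1 c2 g2 : ℕ} (hp : 0 < p) (h1 : c1 < p) (h2 : c2 < p)
    (h : c1 + p * g1 = c2 + p * g2) : c1 = c2 ∧ g1 = g2 := by
  have m1 : (c1 + p * g1) % p = c1 := by
    rw [Nat.add_mul_mod_self_left, Nat.mod_eq_of_lt h1]
  have m2 : (c2 + p * g2) % p = c2 := by
    rw [Nat.add_mul_mod_self_left, Nat.mod_eq_of_lt h2]
  have d1 : (c1 + p * g1) / p = g1 := by
    rw [Nat.add_mul_div_left _ _ hp, Nat.div_eq_of_lt h1, Nat.zero_add]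
  have d2 : (c2 + p * g2) / p = g2 := by
    rw [Nat.add_mul_div_left _ _ hp, Nat.div_eq_of_lt h2, Nat.zero_add]
  exact ⟨by rw [← m1, ← m2, h], by rw [← d1, ← d2, h]⟩

private lemma xor_cancel_r {a b c : ℕ} (h : a ^^^ c = b ^^^ c) : a = b := by
  have h2 := congrArg (· ^^^ c) h
  simpa [Nat.xor_assoc, Nat.xor_self, Nat.xor_zero] using h2

/-- A horizontal move always changes the `fval`. -/
private lemma hor_ne {p q r x y s : ℕ} (hp : 0 < p) (hq : 0 < q)
    (hs1 : 1 ≤ s) (hs2 : s ≤ x) (hs3 : s < q) :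
    fval p q r (x - s) y ≠ fval p q r x y := by
  intro h
  unfold fval at h
  obtain ⟨hm, hd⟩ := decomp_inj hp (Nat.mod_lt _ hp) (Nat.mod_lt _ hp) h
  have hxd : (x - s) % q / p = x % q / p := xor_cancel_r hd
  have hme : (x - s) % q ≡ x % q [MOD p] := Nat.ModEq.add_right_cancel' (y % r) hm
  have hmm : (x - s) % q % p = x % q % p := hme
  have e1 := Nat.mod_add_div ((x - s) % q) p
  have e2 := Nat.mod_add_div (x % q) p
  rw [hxd] at e1
  have heq : (x - s) % q = x % q := by omega
  have hmq : x - s ≡ x [MOD q] := heq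
  have hdvd : q ∣ x - (x - s) := (Nat.modEq_iff_dvd' (Nat.sub_le x s)).mp hmq
  have hxs : x - (x - s) = s := by omega
  rw [hxs] at hdvd
  have := Nat.le_of_dvd (by omega) hdvd
  omega

/-- A vertical move always changes the `fval`. -/
private lemma ver_ne {p q r x y t : ℕ} (hp : 0 < p) (hr : 0 < r)
    (ht1 : 1 ≤ t) (ht2 : t ≤ y) (ht3 : t < r) :
    fval p q r x (y - t) ≠ fval p q r x y := by
  intro h
  unfold fval at h
  obtain ⟨hm, hd⟩ := decomp_inj hp (Nat.mod_lt _ hp) (Nat.mod_lt _ hp) h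
  have hxd : (y - t) % r / p = y % r / p := by
    have h2 := congrArg (fun z => (x % q / p) ^^^ z) hd
    simpa [← Nat.xor_assoc, Nat.xor_self, Nat.zero_xor] using h2
  have hme : (y - t) % r ≡ y % r [MOD p] := Nat.ModEq.add_left_cancel' (x % q) hm
  have hmm : (y - t) % r % p = y % r % p := hme
  have e1 := Nat.mod_add_div ((y - t) % r) p
  have e2 := Nat.mod_add_div (y % r) p
  rw [hxd] at e1
  have heq : (y - t) % r = y % r := by omega
  have hmq : y - t ≡ y [MOD r] := heq
  have hdvd : r ∣ y - (y - t) := (Nat.modEq_iff_dvd' (Nat.sub_le y t)).mp hmq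
  have hyt : y - (y - t) = t := by omega
  rw [hyt] at hdvd
  have := Nat.le_of_dvd (by omega) hdvd
  omega

/-- A diagonal move always changes the `fval`. -/
private lemma diag_ne {p q r x y s t : ℕ} (hp : 0 < p) (hpq : p ∣ q) (hpr : p ∣ r)
    (hs1 : 1 ≤ s) (hs2 : s ≤ x) (ht1 : 1 ≤ t) (ht2 : t ≤ y) (hst : s + t ≤ p - 1) :
    fval p q r (x - s) (y - t) ≠ fval p q r x y := by
  intro h
  unfold fval at h
  obtain ⟨hm, -⟩ := decomp_inj hp (Nat.mod_lt _ hp) (Nat.mod_lt _ hp) h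
  have e1 : (x - s) % q ≡ x - s [MOD p] := (Nat.mod_modEq (x - s) q).of_dvd hpq
  have e2 : (y - t) % r ≡ y - t [MOD p] := (Nat.mod_modEq (y - t) r).of_dvd hpr
  have e3 : x % q ≡ x [MOD p] := (Nat.mod_modEq x q).of_dvd hpq
  have e4 : y % r ≡ y [MOD p] := (Nat.mod_modEq y r).of_dvd hpr
  have hm' : (x - s) % q + (y - t) % r ≡ x % q + y % r [MOD p] := hm
  have hm2 : (x - s) + (y - t) ≡ x + y [MOD p] :=
    ((e1.add e2).symm.trans hm').trans (e3.add e4)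
  have hrw : (x - s) + (y - t) = x + y - (s + t) := by omega
  rw [hrw] at hm2
  have hdvd : p ∣ (x + y) - (x + y - (s + t)) :=
    (Nat.modEq_iff_dvd' (Nat.sub_le _ _)).mp hm2
  have he : (x + y) - (x + y - (s + t)) = s + t := by omega
  rw [he] at hdvd
  have := Nat.le_of_dvd (by omega) hdvd
  omega

/-- Construction of target remainders realizing any smaller value. -/
private lemma target {p a b v : ℕ} (hp0 : 0 < p)
    (hv : v < (a + b) % p + p * (a / p ^^^ b / p)) :
    ∃ a' b', ((a' < a ∧ b' = b) ∨ (a' = a ∧ b' < b) ∨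
      (a' < a ∧ b' < b ∧ (a - a') + (b - b') ≤ p - 1)) ∧
      (a' + b') % p + p * (a' / p ^^^ b' / p) = v := by
  have hcp : (a + b) % p < p := Nat.mod_lt _ hp0
  have hvdm : v % p + p * (v / p) = v := Nat.mod_add_div v p
  have hv0p : v % p < p := Nat.mod_lt v hp0
  have hv1g : v / p ≤ a / p ^^^ b / p := by
    by_contra hcon
    push_neg at hcon
    have h1 : p * ((a / p ^^^ b / p) + 1) ≤ p * (v / p) :=
      Nat.mul_le_mul (le_refl p) (by omega)
    have h2 : p * ((a / p ^^^ b / p) + 1) = p * (a / p ^^^ b / p) + p :=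
      by ring
    omega
  rcases eq_or_lt_of_le hv1g with hvg | hvg
  · -- same xor part, smaller mod part
    have hee : p * (v / p) = p * (a / p ^^^ b / p) := by rw [hvg]
    have hv0c : v % p < (a + b) % p := by omega
    have hcab : (a + b) % p ≤ a % p + b % p := by
      have h1 : (a + b) % p = (a % p + b % p) % p := by rw [Nat.add_mod]
      have h2 := Nat.mod_le (a % p + b % p) p
      omega
    set d := (a + b) % p - v % p with hd
    have hd1 : 1 ≤ d := by omega
    have hdc : d ≤ (a + b) % p := by omega
    obtain ⟨s, t, hsa, htb, hst⟩ : ∃ s t, s ≤ a % p ∧ t ≤ b % p ∧ s + t = d := by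
      rcases le_total d (a % p) with hle | hle
      · exact ⟨d, 0, hle, Nat.zero_le _, by omega⟩
      · exact ⟨a % p, d - a % p, le_refl _, by omega, by omega⟩
    have hamp : a % p ≤ a := Nat.mod_le a p
    have hbmp : b % p ≤ b := Nat.mod_le b p
    refine ⟨a - s, b - t, ?_, ?_⟩
    · rcases Nat.eq_zero_or_pos s with hs0 | hs0
      · refine Or.inr (Or.inl ⟨by omega, by omega⟩)
      · rcases Nat.eq_zero_or_pos t with ht0 | ht0
        · exact Or.inl ⟨by omega, by omega⟩
        · exact Or.inr (Or.inr ⟨by omega, by omega, by omega⟩)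
    · have hsum : (a - s) + (b - t) = (a + b) - d := by omega
      have hdm : ((a + b) - d) % p = (a + b) % p - d := mySubMod hp0 hdc
      have hda : (a - s) / p = a / p := mySubDiv hp0 hsa
      have hdb : (b - t) / p = b / p := mySubDiv hp0 htb
      rw [hsum, hdm, hda, hdb, ← hvg]
      omega
  · -- smaller xor part
    rcases Nat.lt_xor_cases hvg with hca | hcb
    · -- change the a-side
      set a0 : ℕ := (v % p + (p - b % p)) % p with ha0
      have ha0p : a0 < p := Nat.mod_lt _ hp0
      set a' : ℕ := p * (v / p ^^^ b / p) + a0 with ha'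
      have hm' : a' % p = a0 := by
        rw [ha', Nat.mul_add_mod, Nat.mod_eq_of_lt ha0p]
      have hd' : a' / p = v / p ^^^ b / p := by
        rw [ha', Nat.mul_add_div hp0, Nat.div_eq_of_lt ha0p, Nat.add_zero]
      have haa : a' < a := by
        have h1 : a' < p * (v / p ^^^ b / p) + p := by omega
        have h2 : p * ((v / p ^^^ b / p) + 1) ≤ p * (a / p) :=
          Nat.mul_le_mul (le_refl p) (by omega)
        have h4 : p * ((v / p ^^^ b / p) + 1) = p * (v / p ^^^ b / p) + p :=
          by ring
        have h3 := Nat.mod_add_div a p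
        omega
      refine ⟨a', b, Or.inl ⟨haa, rfl⟩, ?_⟩
      have hbp : b % p < p := Nat.mod_lt _ hp0
      have hxor : a' / p ^^^ b / p = v / p := by
        rw [hd', Nat.xor_assoc, Nat.xor_self, Nat.xor_zero]
      have hmod : (a' + b) % p = v % p := by
        rw [Nat.add_mod, hm', ha0, Nat.mod_add_mod]
        have heq2 : v % p + (p - b % p) + b % p = v % p + p := by omega
        rw [heq2, Nat.add_mod_right, Nat.mod_eq_of_lt hv0p]
      rw [hxor, hmod]
      omega
    · -- change the b-side
      set b0 : ℕ := (v % p + (p - a % p)) % p with hb0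
      have hb0p : b0 < p := Nat.mod_lt _ hp0
      set b' : ℕ := p * (v / p ^^^ a / p) + b0 with hb'
      have hm' : b' % p = b0 := by
        rw [hb', Nat.mul_add_mod, Nat.mod_eq_of_lt hb0p]
      have hd' : b' / p = v / p ^^^ a / p := by
        rw [hb', Nat.mul_add_div hp0, Nat.div_eq_of_lt hb0p, Nat.add_zero]
      have hbb : b' < b := by
        have h1 : b' < p * (v / p ^^^ a / p) + p := by omega
        have h2 : p * ((v / p ^^^ a / p) + 1) ≤ p * (b / p) :=
          Nat.mul_le_mul (le_refl p) (by omega)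
        have h4 : p * ((v / p ^^^ a / p) + 1) = p * (v / p ^^^ a / p) + p :=
          by ring
        have h3 := Nat.mod_add_div b p
        omega
      refine ⟨a, b', Or.inr (Or.inl ⟨rfl, hbb⟩), ?_⟩
      have hap : a % p < p := Nat.mod_lt _ hp0
      have hxor : a / p ^^^ b' / p = v / p := by
        rw [hd', Nat.xor_comm (v / p), ← Nat.xor_assoc, Nat.xor_self, Nat.zero_xor]
      have hmod : (a + b') % p = v % p := by
        rw [Nat.add_mod, hm', hb0, Nat.add_mod_mod]
        have heq2 : a % p + (v % p + (p - a % p)) = v % p + p := by omega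
        rw [heq2, Nat.add_mod_right, Nat.mod_eq_of_lt hv0p]
      rw [hxor, hmod]
      omega

theorem stmt_14 (p q r : ℕ) (hp : 2 ≤ p) (hq : 2 ≤ q) (hr : 2 ≤ r)
    (hqp : q % p = 0) (hrp : r % p = 0)
    (G : ℕ × ℕ → ℕ) (hG : ∀ pos : ℕ × ℕ, G pos = mex (G '' resMove p q r pos)) :
    ∀ x y : ℕ, G (x, y) =
      (x % q + y % r) % p + p * ((x % q / p) ^^^ (y % r / p)) := by
  have hp0 : 0 < p := by omega
  have hq0 : 0 < q := by omega
  have hr0 : 0 < r := by omega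
  have hpq : p ∣ q := Nat.dvd_of_mod_eq_zero hqp
  have hpr : p ∣ r := Nat.dvd_of_mod_eq_zero hrp
  have hpleq : p ≤ q := Nat.le_of_dvd hq0 hpq
  have hpler : p ≤ r := Nat.le_of_dvd hr0 hpr
  suffices key : ∀ n x y, x + y = n → G (x, y) = fval p q r x y by
    intro x y
    exact key (x + y) x y rfl
  intro n
  induction n using Nat.strong_induction_on with
  | _ n IH =>
    intro x y hxy
    rw [hG]
    apply mex_eq_s14
    · -- fval is not the value of any move
      rintro ⟨pos', hmem, hGe⟩
      simp only [resMove, Set.mem_union, Set.mem_setOf_eq] at hmem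
      rcases hmem with (⟨s, hs1, hs2, hs3, rfl⟩ | ⟨t, ht1, ht2, ht3, rfl⟩) |
        ⟨s, t, hs1, hs2, ht1, ht2, hst, rfl⟩
      · rw [IH (x - s + y) (by omega) (x - s) y rfl] at hGe
        exact hor_ne hp0 hq0 hs1 hs2 (by omega) hGe
      · rw [IH (x + (y - t)) (by omega) x (y - t) rfl] at hGe
        exact ver_ne hp0 hr0 ht1 ht2 (by omega) hGe
      · rw [IH (x - s + (y - t)) (by omega) (x - s) (y - t) rfl] at hGe
        exact diag_ne hp0 hpq hpr hs1 hs2 ht1 ht2 hst hGe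
    · -- every smaller value is attained
      intro k hk
      have hk' : k < (x % q + y % r) % p + p * (x % q / p ^^^ y % r / p) := hk
      obtain ⟨a', b', hcase, hval⟩ := target hp0 hk'
      have haq : x % q < q := Nat.mod_lt x hq0
      have hbr : y % r < r := Nat.mod_lt y hr0
      have hax : x % q ≤ x := Nat.mod_le x q
      have hby : y % r ≤ y := Nat.mod_le y r
      rcases hcase with ⟨ha, hb⟩ | ⟨ha, hb⟩ | ⟨ha, hb, hab⟩
      · -- horizontal move
        set s := x % q - a' with hs
        have hs1 : 1 ≤ s := by omega
        have hsx : s ≤ x := by omega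
        have hxs : (x - s) % q = a' := by
          rw [mySubMod hq0 (by omega)]; omega
        refine ⟨(x - s, y), Or.inl (Or.inl ⟨s, hs1, hsx, by omega, rfl⟩), ?_⟩
        rw [IH (x - s + y) (by omega) (x - s) y rfl]
        show fval p q r (x - s) y = k
        unfold fval
        rw [hxs, ← hb]
        exact hval
      · -- vertical move
        set t := y % r - b' with ht
        have ht1 : 1 ≤ t := by omega
        have hty : t ≤ y := by omega
        have hyt : (y - t) % r = b' := by
          rw [mySubMod hr0 (by omega)]; omega
        refine ⟨(x, y - t), Or.inl (Or.inr ⟨t, ht1, hty, by omega, rfl⟩), ?_⟩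
        rw [IH (x + (y - t)) (by omega) x (y - t) rfl]
        show fval p q r x (y - t) = k
        unfold fval
        rw [hyt, ← ha]
        exact hval
      · -- diagonal move
        set s := x % q - a' with hs
        set t := y % r - b' with ht
        have hs1 : 1 ≤ s := by omega
        have ht1 : 1 ≤ t := by omega
        have hsx : s ≤ x := by omega
        have hty : t ≤ y := by omega
        have hstp : s + t ≤ p - 1 := by omega
        have hxs : (x - s) % q = a' := by
          rw [mySubMod hq0 (by omega)]; omega
        have hyt : (y - t) % r = b' := by
          rw [mySubMod hr0 (by omega)]; omega
        refine ⟨(x - s, y - t),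
          Or.inr ⟨s, t, hs1, hsx, ht1, hty, hstp, rfl⟩, ?_⟩
        rw [IH (x - s + (y - t)) (by omega) (x - s) (y - t) rfl]
        show fval p q r (x - s) (y - t) = k
        unfold fval
        rw [hxs, hyt]
        exact hval
end

section
/- For all non-negative integers x, y and z, the Grundy value of the position (x,y,z) in modified 3-dimensional Ryūō Nim is 𝒢(x,y,z) = mod(x+y+z, 3) + 3·(⌊x/3⌋ ⊕ ⌊y/3⌋ ⊕ ⌊z/3⌋). -/
/-- Moves of modified 3-dimensional Ryūō Nim: remove any positive number of tokens
from a single heap, or one token from each of two heaps (removing one token from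
all three heaps is not allowed). -/
def move3' (pos : ℕ × ℕ × ℕ) : Set (ℕ × ℕ × ℕ) :=
  {q | ∃ u < pos.1, q = (u, pos.2.1, pos.2.2)} ∪
  {q | ∃ v < pos.2.1, q = (pos.1, v, pos.2.2)} ∪
  {q | ∃ w < pos.2.2, q = (pos.1, pos.2.1, w)} ∪
  {q | 1 ≤ pos.1 ∧ 1 ≤ pos.2.1 ∧ q = (pos.1 - 1, pos.2.1 - 1, pos.2.2)} ∪
  {q | 1 ≤ pos.1 ∧ 1 ≤ pos.2.2 ∧ q = (pos.1 - 1, pos.2.1, pos.2.2 - 1)} ∪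
  {q | 1 ≤ pos.2.1 ∧ 1 ≤ pos.2.2 ∧ q = (pos.1, pos.2.1 - 1, pos.2.2 - 1)}

lemma mex_eq_of_notMem_of_forall_lt_mem {S : Set ℕ} {n : ℕ} (hn : n ∉ S)
    (hlt : ∀ k < n, k ∈ S) : mex S = n := by
  refine le_antisymm (Nat.sInf_le hn) (not_lt.mp fun h => ?_)
  exact Nat.sInf_mem (⟨n, hn⟩ : {m : ℕ | m ∉ S}.Nonempty) (hlt _ h)

theorem eq_of_forall_eq_mex_image {α : Type*} {moves : α → Set α}
    (hwf : WellFounded fun q p => q ∈ moves p) {G F : α → ℕ}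
    (hG : ∀ p, G p = mex (G '' moves p)) (hF : ∀ p, F p = mex (F '' moves p)) : G = F := by
  funext p
  induction p using hwf.induction with
  | _ p ih => rw [hG, hF, Set.image_congr ih]

theorem Nat.exists_lt_of_lt_xor_xor {a b c t : ℕ} (h : t < a ^^^ b ^^^ c) :
    (∃ a' < a, a' ^^^ b ^^^ c = t) ∨ (∃ b' < b, a ^^^ b' ^^^ c = t) ∨
      (∃ c' < c, a ^^^ b ^^^ c' = t) := by
  rcases Nat.lt_xor_cases h with hab | hc
  · rcases Nat.lt_xor_cases hab with ha | hb
    · exact Or.inl ⟨t ^^^ c ^^^ b, ha, by simp [xor_cancel_right]⟩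
    · exact Or.inr (Or.inl ⟨t ^^^ c ^^^ a, hb, by simp [Nat.xor_assoc]⟩)
  · exact Or.inr (Or.inr ⟨t ^^^ (a ^^^ b), hc, by simp⟩)

namespace RyuoNim3

def grundyFormula : ℕ × ℕ × ℕ → ℕ
  | (x, y, z) => (x + y + z) % 3 + 3 * (x / 3 ^^^ y / 3 ^^^ z / 3)

lemma grundyFormula_eq {x y z k : ℕ} (hmod : (x + y + z) % 3 = k % 3)
    (hxor : x / 3 ^^^ y / 3 ^^^ z / 3 = k / 3) : grundyFormula (x, y, z) = k := by
  simp only [grundyFormula, hxor]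
  omega

section Moves

variable {x y z : ℕ}

lemma mem_move3'_of_lt_fst {u : ℕ} (h : u < x) : (u, y, z) ∈ move3' (x, y, z) :=
  Or.inl (Or.inl (Or.inl (Or.inl (Or.inl ⟨u, h, rfl⟩))))

lemma mem_move3'_of_lt_snd {v : ℕ} (h : v < y) : (x, v, z) ∈ move3' (x, y, z) :=
  Or.inl (Or.inl (Or.inl (Or.inl (Or.inr ⟨v, h, rfl⟩))))

lemma mem_move3'_of_lt_thd {w : ℕ} (h : w < z) : (x, y, w) ∈ move3' (x, y, z) :=
  Or.inl (Or.inl (Or.inl (Or.inr ⟨w, h, rfl⟩)))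

lemma sub_one_sub_one_mem_move3' (hx : 1 ≤ x) (hy : 1 ≤ y) :
    (x - 1, y - 1, z) ∈ move3' (x, y, z) :=
  Or.inl (Or.inl (Or.inr ⟨hx, hy, rfl⟩))

lemma sub_one_self_sub_one_mem_move3' (hx : 1 ≤ x) (hz : 1 ≤ z) :
    (x - 1, y, z - 1) ∈ move3' (x, y, z) :=
  Or.inl (Or.inr ⟨hx, hz, rfl⟩)

lemma self_sub_one_sub_one_mem_move3' (hy : 1 ≤ y) (hz : 1 ≤ z) :
    (x, y - 1, z - 1) ∈ move3' (x, y, z) :=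
  Or.inr ⟨hy, hz, rfl⟩

lemma exists_mem_move3'_div_three_eq_of_le {d : ℕ} (hd1 : 1 ≤ d) (hd2 : d ≤ 2)
    (hres : d ≤ x % 3 + y % 3 + z % 3) :
    ∃ x' y' z', (x', y', z') ∈ move3' (x, y, z) ∧ x' / 3 = x / 3 ∧ y' / 3 = y / 3 ∧
      z' / 3 = z / 3 ∧ x' + y' + z' + d = x + y + z := by
  have hcases : (d = 1 ∧ 1 ≤ x % 3) ∨ (d = 1 ∧ 1 ≤ y % 3) ∨ (d = 1 ∧ 1 ≤ z % 3) ∨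
      (d = 2 ∧ x % 3 = 2) ∨ (d = 2 ∧ y % 3 = 2) ∨ (d = 2 ∧ z % 3 = 2) ∨
      (d = 2 ∧ 1 ≤ x % 3 ∧ 1 ≤ y % 3) ∨ (d = 2 ∧ 1 ≤ x % 3 ∧ 1 ≤ z % 3) ∨
      (d = 2 ∧ 1 ≤ y % 3 ∧ 1 ≤ z % 3) := by omega
  rcases hcases with h | h | h | h | h | h | h | h | h
  · exact ⟨x - 1, y, z, mem_move3'_of_lt_fst (by omega), by omega, by omega, by omega, by omega⟩
  · exact ⟨x, y - 1, z, mem_move3'_of_lt_snd (by omega), by omega, by omega, by omega, by omega⟩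
  · exact ⟨x, y, z - 1, mem_move3'_of_lt_thd (by omega), by omega, by omega, by omega, by omega⟩
  · exact ⟨x - 2, y, z, mem_move3'_of_lt_fst (by omega), by omega, by omega, by omega, by omega⟩
  · exact ⟨x, y - 2, z, mem_move3'_of_lt_snd (by omega), by omega, by omega, by omega, by omega⟩
  · exact ⟨x, y, z - 2, mem_move3'_of_lt_thd (by omega), by omega, by omega, by omega, by omega⟩
  · exact ⟨x - 1, y - 1, z, sub_one_sub_one_mem_move3' (by omega) (by omega),
      by omega, by omega, by omega, by omega⟩
  · exact ⟨x - 1, y, z - 1, sub_one_self_sub_one_mem_move3' (by omega) (by omega),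
      by omega, by omega, by omega, by omega⟩
  · exact ⟨x, y - 1, z - 1, self_sub_one_sub_one_mem_move3' (by omega) (by omega),
      by omega, by omega, by omega, by omega⟩

end Moves

lemma sum_lt_of_mem_move3' {p q : ℕ × ℕ × ℕ} (hq : q ∈ move3' p) :
    q.1 + q.2.1 + q.2.2 < p.1 + p.2.1 + p.2.2 := by
  obtain ⟨x, y, z⟩ := p
  simp only [move3', Set.mem_union, Set.mem_ofPred_eq] at hq
  rcases hq with ((((⟨u, hu, rfl⟩ | ⟨v, hv, rfl⟩) | ⟨w, hw, rfl⟩) | ⟨hx, hy, rfl⟩) |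
    ⟨hx, hz, rfl⟩) | ⟨hy, hz, rfl⟩ <;> dsimp only <;> omega

lemma wellFounded_mem_move3' : WellFounded fun q p : ℕ × ℕ × ℕ => q ∈ move3' p :=
  Subrelation.wf sum_lt_of_mem_move3'
    (measure fun p : ℕ × ℕ × ℕ => p.1 + p.2.1 + p.2.2).wf


lemma grundyFormula_ne_of_mem_move3' {x y z : ℕ} {q : ℕ × ℕ × ℕ}
    (hq : q ∈ move3' (x, y, z)) : grundyFormula q ≠ grundyFormula (x, y, z) := by
  simp only [move3', Set.mem_union, Set.mem_ofPred_eq] at hq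
  rcases hq with ((((⟨u, hu, rfl⟩ | ⟨v, hv, rfl⟩) | ⟨w, hw, rfl⟩) | ⟨hx, hy, rfl⟩) |
    ⟨hx, hz, rfl⟩) | ⟨hy, hz, rfl⟩ <;> simp only [grundyFormula] <;> intro h
  · have : u / 3 = x / 3 := by
      simpa using (show u / 3 ^^^ y / 3 ^^^ z / 3 = x / 3 ^^^ y / 3 ^^^ z / 3 by omega)
    omega
  · have : v / 3 = y / 3 := by
      simpa using (show x / 3 ^^^ v / 3 ^^^ z / 3 = x / 3 ^^^ y / 3 ^^^ z / 3 by omega)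
    omega
  · have : w / 3 = z / 3 := by
      simpa using (show x / 3 ^^^ y / 3 ^^^ w / 3 = x / 3 ^^^ y / 3 ^^^ z / 3 by omega)
    omega
  all_goals omega

lemma exists_mem_move3'_grundyFormula_eq {x y z k : ℕ} (hk : k < grundyFormula (x, y, z)) :
    ∃ q ∈ move3' (x, y, z), grundyFormula q = k := by
  simp only [grundyFormula] at hk
  by_cases hxor : x / 3 ^^^ y / 3 ^^^ z / 3 = k / 3
  · obtain ⟨x', y', z', hq, hx, hy, hz, hsum⟩ :=
      exists_mem_move3'_div_three_eq_of_le (x := x) (y := y) (z := z)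
        (d := (x + y + z) % 3 - k % 3) (by omega) (by omega) (by omega)
    refine ⟨(x', y', z'), hq, grundyFormula_eq (by omega) ?_⟩
    rwa [hx, hy, hz]
  -- residue `(k + 2 * s) % 3` for the new heap, `s` the other two heaps, makes the total `≡ k`
  obtain ⟨a, ha, hxor'⟩ | ⟨b, hb, hxor'⟩ | ⟨c, hc, hxor'⟩ :=
    Nat.exists_lt_of_lt_xor_xor (a := x / 3) (b := y / 3) (c := z / 3) (t := k / 3)
      (by omega)
  · refine ⟨(3 * a + (k + 2 * (y + z)) % 3, y, z), mem_move3'_of_lt_fst (by omega),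
      grundyFormula_eq (by omega) ?_⟩
    rwa [show (3 * a + (k + 2 * (y + z)) % 3) / 3 = a by omega]
  · refine ⟨(x, 3 * b + (k + 2 * (x + z)) % 3, z), mem_move3'_of_lt_snd (by omega),
      grundyFormula_eq (by omega) ?_⟩
    rwa [show (3 * b + (k + 2 * (x + z)) % 3) / 3 = b by omega]
  · refine ⟨(x, y, 3 * c + (k + 2 * (x + y)) % 3), mem_move3'_of_lt_thd (by omega),
      grundyFormula_eq (by omega) ?_⟩
    rwa [show (3 * c + (k + 2 * (x + y)) % 3) / 3 = c by omega]

lemma grundyFormula_eq_mex (p : ℕ × ℕ × ℕ) :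
    grundyFormula p = mex (grundyFormula '' move3' p) := by
  obtain ⟨x, y, z⟩ := p
  refine (mex_eq_of_notMem_of_forall_lt_mem ?_ fun _ => exists_mem_move3'_grundyFormula_eq).symm
  rintro ⟨q, hq, hval⟩
  exact grundyFormula_ne_of_mem_move3' hq hval

end RyuoNim3

theorem stmt_16 (G : ℕ × ℕ × ℕ → ℕ)
    (hG : ∀ pos : ℕ × ℕ × ℕ, G pos = mex (G '' move3' pos)) :
    ∀ x y z : ℕ, G (x, y, z) =
      (x + y + z) % 3 + 3 * ((x / 3) ^^^ (y / 3) ^^^ (z / 3)) := by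
  intro x y z
  exact congrFun (eq_of_forall_eq_mex_image RyuoNim3.wellFounded_mem_move3' hG
    RyuoNim3.grundyFormula_eq_mex) (x, y, z)
end
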